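/- arXiv:2603.08446 — 6 statements merged into one kernel-verified Lean document; each statement's English description precedes it below -/
import Mathlib

section
/- Let (Ω, F, μ) be a probability space with a filtration {F_k}_{k≥0} of sub-σ-algebras whose union generates F, and fix r ∈ (0,1). For every measurable function f : Ω → ℝ and every λ ≥ 0, one has μ({x : P_r f(x) > λ}) ≤ (1/r) · μ({x : |f(x)| > λ}), where P_r f := sup_{k≥0} P_k^r |f| is the percentile maximal function. -/
/-!
If `P_r f x > λ`, then for some `k` and some rational `q > λ` the conditional probability
`E_k[1_{|f| > q}](x)` exceeds `r`; since these conditional probabilities decrease in `q` (almost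
everywhere, simultaneously for all rational `q`), `x` lies, up to a null set, in the set where the
martingale `k ↦ E_k[1_{|f| > λ}]` exceeds `r` at some time. Doob's maximal inequality bounds the
measure of that set by `μ(|f| > λ) / r`.
-/

open MeasureTheory
open scoped ENNReal NNReal

noncomputable def condPercentile {Ω : Type*} {m0 : MeasurableSpace Ω} (μ : Measure Ω)
    (ℱ : Filtration ℕ m0) (r : ℝ) (k : ℕ) (g : Ω → ℝ) (x : Ω) : ℝ :=
  sInf {t : ℝ | ∃ q : ℚ, t = (q : ℝ) ∧
    (μ[Set.indicator {y | g y > (q : ℝ)} (fun _ => (1 : ℝ)) | ℱ k]) x ≤ r}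

noncomputable def percentileMax {Ω : Type*} {m0 : MeasurableSpace Ω} (μ : Measure Ω)
    (ℱ : Filtration ℕ m0) (r : ℝ) (f : Ω → ℝ) (x : Ω) : ℝ :=
  ⨆ k : ℕ, condPercentile μ ℱ r k (fun y => |f y|) x

section

variable {Ω : Type*} {m0 : MeasurableSpace Ω} {μ : Measure Ω} {ℱ : Filtration ℕ m0}

open Finset in
theorem MeasureTheory.Submartingale.mul_measure_exists_le_le_iSup [IsFiniteMeasure μ]
    {f : ℕ → Ω → ℝ} (hsub : Submartingale f ℱ μ) (hnonneg : 0 ≤ f) (ε : ℝ≥0) :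
    ε * μ {ω | ∃ n, (ε : ℝ) ≤ f n ω} ≤ ⨆ n, ENNReal.ofReal (∫ ω, f n ω ∂μ) := by
  set S : ℕ → Set Ω := fun n =>
    {ω | (ε : ℝ) ≤ (range (n + 1)).sup' nonempty_range_add_one fun k => f k ω}
  have hS_mono : Monotone S := by
    intro m n hmn ω (hω : (ε : ℝ) ≤ _)
    exact hω.trans (sup'_mono (fun k => f k ω) (range_subset_range.2 (by omega)) _)
  have h_subset : {ω | ∃ n, (ε : ℝ) ≤ f n ω} ⊆ ⋃ n, S n := fun ω ⟨n, hn⟩ =>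
    Set.mem_iUnion.2 ⟨n, hn.trans (le_sup' (fun k => f k ω) (self_mem_range_succ n))⟩
  calc ε * μ {ω | ∃ n, (ε : ℝ) ≤ f n ω} ≤ ε * ⨆ n, μ (S n) := by
        rw [← hS_mono.measure_iUnion]; gcongr
    _ = ⨆ n, ε * μ (S n) := ENNReal.mul_iSup _ _
    _ ≤ ⨆ n, ENNReal.ofReal (∫ ω, f n ω ∂μ) := by
        gcongr with n
        exact (maximal_ineq hsub hnonneg n).trans (ENNReal.ofReal_le_ofReal
          (setIntegral_le_integral (hsub.integrable n) (.of_forall (hnonneg n))))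

theorem mul_measure_exists_lt_condExp_le [IsFiniteMeasure μ] {g : Ω → ℝ}
    (hg0 : 0 ≤ᵐ[μ] g) (ε : ℝ≥0) :
    ε * μ {ω | ∃ n, (ε : ℝ) < μ[g|ℱ n] ω} ≤ ENNReal.ofReal (∫ ω, g ω ∂μ) := by
  set M : ℕ → Ω → ℝ := fun n => μ[g|ℱ n]
  have h_integral (n : ℕ) : ∫ ω, M⁺ n ω ∂μ = ∫ ω, g ω ∂μ :=
    calc ∫ ω, M⁺ n ω ∂μ = ∫ ω, M n ω ∂μ :=
          integral_congr_ae ((condExp_nonneg hg0).mono fun ω h => max_eq_left h)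
      _ = ∫ ω, g ω ∂μ := integral_condExp (ℱ.le n)
  calc ε * μ {ω | ∃ n, (ε : ℝ) < M n ω} ≤ ε * μ {ω | ∃ n, (ε : ℝ) ≤ M⁺ n ω} := by
        gcongr with ω n
        exact fun hn => hn.le.trans (le_max_left _ _)
    _ ≤ ⨆ n, ENNReal.ofReal (∫ ω, M⁺ n ω ∂μ) :=
        (martingale_condExp g ℱ μ).submartingale.pos.mul_measure_exists_le_le_iSup
          (fun n ω => le_max_right _ _) ε
    _ = ENNReal.ofReal (∫ ω, g ω ∂μ) := by simp only [h_integral, ciSup_const]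

theorem measure_exists_lt_condExp_indicator_le [IsFiniteMeasure μ] {A : Set Ω}
    (hA : MeasurableSet A) {r : ℝ} (hr : 0 < r) :
    μ {ω | ∃ n, r < μ[A.indicator (fun _ => (1 : ℝ))|ℱ n] ω} ≤ ENNReal.ofReal (1 / r) * μ A := by
  have h := mul_measure_exists_lt_condExp_le (μ := μ) (ℱ := ℱ)
    (.of_forall (A.indicator_nonneg fun _ _ => zero_le_one)) r.toNNReal
  rw [Real.coe_toNNReal r hr.le, integral_indicator_const _ hA, smul_eq_mul, mul_one,
    ofReal_measureReal] at h
  rw [one_div, ENNReal.ofReal_inv_of_pos hr, ← ENNReal.div_eq_inv_mul,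
    ENNReal.le_div_iff_mul_le (.inl (ENNReal.ofReal_pos.2 hr).ne') (.inl ENNReal.ofReal_ne_top),
    mul_comm]
  exact h

theorem condExp_indicator_one_mono [IsFiniteMeasure μ] {m : MeasurableSpace Ω} {s t : Set Ω}
    (hs : MeasurableSet[m0] s) (ht : MeasurableSet[m0] t) (hst : s ⊆ t) :
    μ[s.indicator (fun _ => (1 : ℝ))|m] ≤ᵐ[μ] μ[t.indicator (fun _ => (1 : ℝ))|m] :=
  condExp_mono ((integrable_const 1).indicator hs) ((integrable_const 1).indicator ht)
    (.of_forall (Set.indicator_le_indicator_of_subset hst fun _ => zero_le_one))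

theorem exists_lt_condExp_indicator_of_lt_condPercentile {r t : ℝ} {k : ℕ} {g : Ω → ℝ} {x : Ω}
    (ht : 0 ≤ t) (hlt : t < condPercentile μ ℱ r k g x) :
    ∃ q : ℚ, t < q ∧ r < μ[{y | g y > (q : ℝ)}.indicator (fun _ => (1 : ℝ))|ℱ k] x := by
  have h_bdd : BddBelow {s : ℝ | ∃ q : ℚ, s = (q : ℝ) ∧
      μ[{y | g y > (q : ℝ)}.indicator (fun _ => (1 : ℝ))|ℱ k] x ≤ r} := by
    -- otherwise `sInf` takes the junk value `0 ≤ t`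
    by_contra h
    rw [condPercentile, Real.sInf_of_not_bddBelow h] at hlt
    exact hlt.not_ge ht
  obtain ⟨q, htq, hq⟩ := exists_rat_btwn hlt
  exact ⟨q, htq, lt_of_not_ge fun hle => (csInf_le h_bdd ⟨q, rfl, hle⟩).not_gt hq⟩

theorem exists_lt_condExp_indicator_of_lt_percentileMax {r t : ℝ} {f : Ω → ℝ} {x : Ω}
    (ht : 0 ≤ t) (hlt : t < percentileMax μ ℱ r f x) :
    ∃ k, ∃ q : ℚ, t < q ∧ r < μ[{y | |f y| > (q : ℝ)}.indicator (fun _ => (1 : ℝ))|ℱ k] x := by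
  obtain ⟨k, hk⟩ : ∃ k, t < condPercentile μ ℱ r k (fun y => |f y|) x := by
    by_contra! h
    exact hlt.not_ge (Real.iSup_le h ht)
  exact ⟨k, exists_lt_condExp_indicator_of_lt_condPercentile ht hk⟩

end

theorem stmt0_general {Ω : Type*} {m0 : MeasurableSpace Ω} (μ : Measure Ω) [IsProbabilityMeasure μ]
    (ℱ : Filtration ℕ m0)
    (r : ℝ) (hr : r ∈ Set.Ioo (0 : ℝ) 1)
    (f : Ω → ℝ) (hf : Measurable f) (lam : ℝ) (hlam : 0 ≤ lam) :
    μ {x | percentileMax μ ℱ r f x > lam} ≤ ENNReal.ofReal (1 / r) * μ {x | |f x| > lam} := by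
  have hA (t : ℝ) : MeasurableSet {y | |f y| > t} := measurableSet_lt measurable_const hf.abs
  -- a countable family of a.e. inequalities, so they hold simultaneously off one null set
  have h_mono : ∀ᵐ x ∂μ, ∀ (q : ℚ) (k : ℕ), lam < q →
      μ[{y | |f y| > (q : ℝ)}.indicator (fun _ => (1 : ℝ))|ℱ k] x ≤
        μ[{y | |f y| > lam}.indicator (fun _ => (1 : ℝ))|ℱ k] x := by
    refine ae_all_iff.2 fun q => ae_all_iff.2 fun k => ?_
    by_cases hq : lam < q
    · filter_upwards [condExp_indicator_one_mono (m := ℱ k) (hA q) (hA lam)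
        fun y hy => hq.trans hy] with x hx using fun _ => hx
    · exact .of_forall fun x h => absurd h hq
  calc μ {x | percentileMax μ ℱ r f x > lam}
      ≤ μ {x | ∃ k, r < μ[{y | |f y| > lam}.indicator (fun _ => (1 : ℝ))|ℱ k] x} := by
        refine measure_mono_ae (h_mono.mono fun x hx hlt => ?_)
        obtain ⟨k, q, hq, hrq⟩ := exists_lt_condExp_indicator_of_lt_percentileMax hlam hlt
        exact ⟨k, hrq.trans_le (hx q k hq)⟩
    _ ≤ ENNReal.ofReal (1 / r) * μ {x | |f x| > lam} :=
        measure_exists_lt_condExp_indicator_le (hA lam) hr.1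

theorem stmt0 {Ω : Type*} {m0 : MeasurableSpace Ω} (μ : Measure Ω) [IsProbabilityMeasure μ]
    (ℱ : Filtration ℕ m0) (hgen : (⨆ k, (ℱ k : MeasurableSpace Ω)) = m0)
    (r : ℝ) (hr : r ∈ Set.Ioo (0 : ℝ) 1)
    (f : Ω → ℝ) (hf : Measurable f) (lam : ℝ) (hlam : 0 ≤ lam) :
    μ {x | percentileMax μ ℱ r f x > lam} ≤ ENNReal.ofReal (1 / r) * μ {x | |f x| > lam} :=
  stmt0_general μ ℱ r hr f hf lam hlam
end

section
/- Let (Ω, F, μ) be a probability space with a filtration {F_k}_{k≥0} of sub-σ-algebras whose union generates F, and fix r ∈ (0,1). For every p ∈ (0,∞) and every f ∈ L^p(Ω), one has ‖P_r f‖_{L^p(Ω)} ≤ r^{−1/p} ‖f‖_{L^p(Ω)}, where P_r f := sup_{k≥0} P_k^r |f| is the percentile maximal function. -/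
/-!
If `P_r f (x) > t`, some `k` has `E_k[1_{|f| > t}](x) > r` (the percentile set is bounded below
by `0` because `E_k[1_{|f| > q}] = 1 > r` for `q < 0`). Doob's maximal inequality for the
martingale `k ↦ E_k[1_{|f| > t}]` then gives the weak-type bound
`μ {P_r f > t} ≤ r⁻¹ μ {|f| > t}`, and the layer-cake formula turns it into the `L^p` bound with
constant `r^{-1/p}`. Measurability is obtained by running the argument for a measurable majorant
of `P_r f` built from rational levels.
-/

open MeasureTheory
open scoped ENNReal

open Filter Topology

namespace MeasureTheory

variable {α : Type*} {m0 : MeasurableSpace α} {μ : Measure α}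

theorem eLpNorm_le_of_meas_lt_le {G F : α → ℝ} (hG : AEMeasurable G μ) (hF : AEMeasurable F μ)
    {C : ℝ≥0∞} (hC : C ≠ ∞) (h : ∀ t > 0, μ {x | t < ‖G x‖} ≤ C * μ {x | t < ‖F x‖})
    {p : ℝ} (hp : 0 < p) :
    eLpNorm G (ENNReal.ofReal p) μ ≤ C ^ (1 / p) * eLpNorm F (ENNReal.ofReal p) μ := by
  have hp0 : ENNReal.ofReal p ≠ 0 := by simpa using hp
  rw [eLpNorm_eq_lintegral_rpow_enorm_toReal hp0 ENNReal.ofReal_ne_top,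
    eLpNorm_eq_lintegral_rpow_enorm_toReal hp0 ENNReal.ofReal_ne_top, ENNReal.toReal_ofReal hp.le,
    ← ENNReal.mul_rpow_of_nonneg _ _ (by positivity)]
  gcongr
  simp_rw [← ofReal_norm, ENNReal.ofReal_rpow_of_nonneg (norm_nonneg _) hp.le]
  rw [lintegral_rpow_eq_lintegral_meas_lt_mul μ (ae_of_all _ fun _ ↦ norm_nonneg _) hG.norm hp,
    lintegral_rpow_eq_lintegral_meas_lt_mul μ (ae_of_all _ fun _ ↦ norm_nonneg _) hF.norm hp,
    mul_left_comm, ← lintegral_const_mul' _ _ hC]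
  refine mul_le_mul_right (setLIntegral_mono' measurableSet_Ioi fun t ht ↦ ?_) _
  rw [← mul_assoc]
  exact mul_le_mul_left (h t ht) _

theorem ae_ne_top_of_meas_lt_le [IsFiniteMeasure μ] {G : α → ℝ≥0∞} {F : α → ℝ}
    (hF : AEMeasurable F μ) {C : ℝ≥0∞} (hC : C ≠ ∞)
    (h : ∀ t > 0, μ {x | ENNReal.ofReal t < G x} ≤ C * μ {x | t < F x}) :
    ∀ᵐ x ∂μ, G x ≠ ∞ := by
  have htail : Tendsto (fun n : ℕ ↦ μ {x | (n : ℝ) < F x}) atTop (𝓝 0) := by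
    have hanti : Antitone fun n : ℕ ↦ {x | (n : ℝ) < F x} :=
      fun m n hmn x (hx : (n : ℝ) < F x) ↦ show (m : ℝ) < F x from
        (Nat.cast_le.2 hmn).trans_lt hx
    have hempty : ⋂ n : ℕ, {x | (n : ℝ) < F x} = ∅ :=
      Set.eq_empty_of_forall_notMem fun x hx ↦ by
        obtain ⟨n, hn⟩ := exists_nat_gt (F x)
        exact (Set.mem_iInter.1 hx n).not_gt hn
    simpa [hempty, Function.comp_def] using tendsto_measure_iInter_atTop
      (fun n ↦ nullMeasurableSet_lt aemeasurable_const hF) hanti ⟨0, measure_ne_top μ _⟩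
  have hbound : ∀ᶠ n : ℕ in atTop, μ {x | G x = ∞} ≤ C * μ {x | (n : ℝ) < F x} :=
    eventually_atTop.2 ⟨1, fun n hn ↦ (measure_mono fun x (hx : G x = ∞) ↦
      show ENNReal.ofReal n < G x from hx ▸ ENNReal.ofReal_lt_top).trans
        (h n (by exact_mod_cast hn))⟩
  have hzero : μ {x | G x = ∞} = 0 := by
    simpa using ge_of_tendsto (ENNReal.Tendsto.const_mul htail (Or.inr hC)) hbound
  exact measure_eq_zero_iff_ae_notMem.1 hzero

theorem ofReal_mul_measure_iUnion_lt_condExp_le [IsFiniteMeasure μ] (ℱ : Filtration ℕ m0)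
    {r : ℝ} (hr : 0 ≤ r) {h : α → ℝ} (h0 : 0 ≤ᵐ[μ] h) :
    ENNReal.ofReal r * μ (⋃ k, {x | r < μ[h | ℱ k] x}) ≤ ENNReal.ofReal (∫ x, h x ∂μ) := by
  set g : ℕ → α → ℝ := fun k ↦ μ[h | ℱ k]
  have hsubmart : Submartingale g⁺ ℱ μ := (martingale_condExp h ℱ μ).submartingale.pos
  set W : ℕ → Set α := fun n ↦
    {x | r ≤ (Finset.range (n + 1)).sup' Finset.nonempty_range_add_one fun k ↦ g⁺ k x}
  have hW : Monotone W := fun m n hmn x (hx : r ≤ _) ↦ hx.trans <|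
    Finset.sup'_mono _ (Finset.range_subset_range.2 (by omega)) Finset.nonempty_range_add_one
  have hcover : (⋃ k, {x | r < g k x}) ⊆ ⋃ n, W n := fun x hx ↦ by
    obtain ⟨k, hk : r < g k x⟩ := Set.mem_iUnion.1 hx
    exact Set.mem_iUnion.2 ⟨k, hk.le.trans <| (le_posPart _).trans <|
      Finset.le_sup' (fun j ↦ g⁺ j x) (Finset.self_mem_range_succ k)⟩
  have hW_le : ∀ n, ENNReal.ofReal r * μ (W n) ≤ ENNReal.ofReal (∫ x, h x ∂μ) := fun n ↦ by
    have hdoob := maximal_ineq hsubmart (fun k x ↦ posPart_nonneg (g k x)) (ε := r.toNNReal) n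
    rw [Real.coe_toNNReal r hr] at hdoob
    refine hdoob.trans (ENNReal.ofReal_le_ofReal ?_)
    calc ∫ x in W n, g⁺ n x ∂μ ≤ ∫ x, g⁺ n x ∂μ :=
          setIntegral_le_integral (hsubmart.integrable n) (ae_of_all _ fun x ↦ posPart_nonneg _)
      _ = ∫ x, g n x ∂μ := integral_congr_ae <| by
          filter_upwards [condExp_nonneg h0 (m := ℱ n)] with x hx using posPart_eq_self.2 hx
      _ = ∫ x, h x ∂μ := integral_condExp (ℱ.le n)
  calc ENNReal.ofReal r * μ (⋃ k, {x | r < g k x})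
      ≤ ENNReal.ofReal r * ⨆ n, μ (W n) := by
        rw [← hW.measure_iUnion]; exact mul_le_mul_right (measure_mono hcover) _
    _ ≤ ENNReal.ofReal (∫ x, h x ∂μ) := by rw [ENNReal.mul_iSup]; exact iSup_le hW_le

end MeasureTheory

section Percentile

variable {Ω : Type*} {m0 : MeasurableSpace Ω} {μ : Measure Ω} {ℱ : Filtration ℕ m0} {r : ℝ}

noncomputable def condTailProb (μ : Measure Ω) (ℱ : Filtration ℕ m0) (k : ℕ) (g : Ω → ℝ)
    (t : ℝ) : Ω → ℝ :=
  μ[Set.indicator {y | g y > t} (fun _ => (1 : ℝ)) | ℱ k]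

variable {f : Ω → ℝ}

noncomputable def percentileMajorant (μ : Measure Ω) (ℱ : Filtration ℕ m0) (r : ℝ)
    (f : Ω → ℝ) (x : Ω) : ℝ≥0∞ :=
  ⨆ q : ℚ, (⋃ k, {y | r < condTailProb μ ℱ k (fun z ↦ |f z|) q y}).indicator
    (fun _ ↦ ENNReal.ofReal q) x

theorem measurable_percentileMajorant : Measurable (percentileMajorant μ ℱ r f) :=
  Measurable.iSup fun _ ↦ measurable_const.indicator <| MeasurableSet.iUnion fun k ↦
    measurableSet_lt measurable_const (stronglyMeasurable_condExp.mono (ℱ.le k)).measurable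

variable [IsFiniteMeasure μ]

theorem condTailProb_of_neg {g : Ω → ℝ} (hg : 0 ≤ g) {t : ℝ} (ht : t < 0) (k : ℕ) :
    condTailProb μ ℱ k g t = 1 := by
  have : {y | g y > t} = Set.univ := Set.eq_univ_of_forall fun y ↦ ht.trans_le (hg y)
  rw [condTailProb, this, Set.indicator_univ]
  exact condExp_const (ℱ.le k) 1

theorem condTailProb_mono {g : Ω → ℝ} (hg : AEMeasurable g μ) {s t : ℝ} (hst : s ≤ t) (k : ℕ) :
    condTailProb μ ℱ k g t ≤ᵐ[μ] condTailProb μ ℱ k g s := by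
  have hint : ∀ u : ℝ, Integrable (Set.indicator {y | g y > u} fun _ ↦ (1 : ℝ)) μ := fun u ↦
    (integrable_const 1).indicator₀ (nullMeasurableSet_lt aemeasurable_const hg)
  refine condExp_mono (hint t) (hint s) (ae_of_all _ fun y ↦ ?_)
  exact Set.indicator_le_indicator_of_subset (fun y (hy : t < g y) ↦ hst.trans_lt hy)
    (fun _ ↦ zero_le_one) y

theorem nonneg_of_condTailProb_le {g : Ω → ℝ} (hg : 0 ≤ g) (hr : r < 1) {k : ℕ} {x : Ω}
    {t : ℝ} (h : condTailProb μ ℱ k g t x ≤ r) : 0 ≤ t := by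
  by_contra! ht
  rw [condTailProb_of_neg hg ht] at h
  exact (h.trans_lt hr).false

theorem condPercentile_nonneg {g : Ω → ℝ} (hg : 0 ≤ g) (hr : r < 1) (k : ℕ) (x : Ω) :
    0 ≤ condPercentile μ ℱ r k g x :=
  Real.sInf_nonneg fun _ ⟨_, ht, hq⟩ ↦ ht ▸ nonneg_of_condTailProb_le hg hr hq

theorem lt_condTailProb_of_lt_condPercentile {g : Ω → ℝ} (hg : 0 ≤ g) (hr : r < 1) {k : ℕ}
    {x : Ω} {q : ℚ} (hq : (q : ℝ) < condPercentile μ ℱ r k g x) :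
    r < condTailProb μ ℱ k g q x := by
  by_contra! h
  have hbdd : BddBelow {t : ℝ | ∃ q : ℚ, t = q ∧ condTailProb μ ℱ k g q x ≤ r} :=
    ⟨0, fun _ ⟨_, ht, hq⟩ ↦ ht ▸ nonneg_of_condTailProb_le hg hr hq⟩
  exact (csInf_le hbdd ⟨q, rfl, h⟩).not_gt hq

theorem percentileMax_nonneg (hr : r < 1) (x : Ω) : 0 ≤ percentileMax μ ℱ r f x :=
  Real.iSup_nonneg fun k ↦ condPercentile_nonneg (fun _ ↦ abs_nonneg _) hr k x

theorem exists_lt_condTailProb_of_lt_percentileMax (hr : r < 1) {x : Ω} {q : ℚ}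
    (hq : (q : ℝ) < percentileMax μ ℱ r f x) :
    ∃ k, r < condTailProb μ ℱ k (fun y ↦ |f y|) q x :=
  (exists_lt_of_lt_ciSup hq).imp fun _ ↦
    lt_condTailProb_of_lt_condPercentile (fun _ ↦ abs_nonneg _) hr

theorem ofReal_percentileMax_le_percentileMajorant (hr : r < 1) (x : Ω) :
    ENNReal.ofReal (percentileMax μ ℱ r f x) ≤ percentileMajorant μ ℱ r f x := by
  refine le_of_forall_lt fun c hc ↦ ?_
  obtain ⟨q, -, hcq, hqP⟩ := ENNReal.lt_iff_exists_rat_btwn.1 hc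
  obtain ⟨k, hk⟩ :=
    exists_lt_condTailProb_of_lt_percentileMax hr (ENNReal.ofReal_lt_ofReal_iff'.1 hqP).1
  refine hcq.trans_le (le_iSup_of_le q ?_)
  rw [Set.indicator_of_mem (Set.mem_iUnion.2 ⟨k, hk⟩)]
  rfl

theorem meas_lt_percentileMajorant_le (hf : AEMeasurable f μ) (hr : 0 < r) (t : ℝ) :
    μ {x | ENNReal.ofReal t < percentileMajorant μ ℱ r f x} ≤
      (ENNReal.ofReal r)⁻¹ * μ {x | t < |f x|} := by
  set V := ⋃ k, {x | r < condTailProb μ ℱ k (fun y ↦ |f y|) t x}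
  have hmono : ∀ᵐ x ∂μ, ∀ (q : ℚ) (k : ℕ), t ≤ q →
      condTailProb μ ℱ k (fun y ↦ |f y|) q x ≤ condTailProb μ ℱ k (fun y ↦ |f y|) t x := by
    refine ae_all_iff.2 fun q ↦ ae_all_iff.2 fun k ↦ ?_
    by_cases htq : t ≤ q
    · exact (condTailProb_mono hf.abs htq k).mono fun x hx _ ↦ hx
    · exact ae_of_all _ fun x h ↦ absurd h htq
  have hsub : {x | ENNReal.ofReal t < percentileMajorant μ ℱ r f x} ≤ᵐ[μ] V := by
    filter_upwards [hmono] with x hx hG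
    obtain ⟨q, hq⟩ := lt_iSup_iff.1 hG
    by_cases hxq : x ∈ ⋃ k, {x | r < condTailProb μ ℱ k (fun y ↦ |f y|) q x}
    · rw [Set.indicator_of_mem hxq] at hq
      obtain ⟨k, hk : r < _⟩ := Set.mem_iUnion.1 hxq
      exact Set.mem_iUnion.2 ⟨k, hk.trans_le (hx q k (ENNReal.ofReal_lt_ofReal_iff'.1 hq).1.le)⟩
    · rw [Set.indicator_of_notMem hxq] at hq
      exact absurd hq not_lt_zero
  have hdoob := ofReal_mul_measure_iUnion_lt_condExp_le (μ := μ) ℱ hr.le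
    (h := Set.indicator {y | |f y| > t} fun _ ↦ (1 : ℝ)) (ae_of_all _ fun y ↦
      Set.indicator_nonneg (fun _ _ ↦ zero_le_one) y)
  rw [integral_indicator₀ (nullMeasurableSet_lt aemeasurable_const hf.abs), setIntegral_const,
    smul_eq_mul, mul_one, measureReal_def, ENNReal.ofReal_toReal (measure_ne_top _ _)] at hdoob
  calc μ {x | ENNReal.ofReal t < percentileMajorant μ ℱ r f x} ≤ μ V := measure_mono_ae hsub
    _ ≤ (ENNReal.ofReal r)⁻¹ * μ {x | t < |f x|} := by
      rw [← ENNReal.div_eq_inv_mul, ENNReal.le_div_iff_mul_le (Or.inl (by simpa using hr))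
        (Or.inl ENNReal.ofReal_ne_top), mul_comm]
      exact hdoob

end Percentile

theorem stmt1_general {Ω : Type*} {m0 : MeasurableSpace Ω} (μ : Measure Ω) [IsProbabilityMeasure μ]
    (ℱ : Filtration ℕ m0)
    (r : ℝ) (hr : r ∈ Set.Ioo (0 : ℝ) 1)
    (p : ℝ) (hp : 0 < p)
    (f : Ω → ℝ) (hf : MemLp f (ENNReal.ofReal p) μ) :
    eLpNorm (percentileMax μ ℱ r f) (ENNReal.ofReal p) μ ≤
      ENNReal.ofReal (r ^ (-(1 / p))) * eLpNorm f (ENNReal.ofReal p) μ := by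
  obtain ⟨hr0, hr1⟩ := hr
  have hfm : AEMeasurable f μ := hf.aestronglyMeasurable.aemeasurable
  set G := percentileMajorant μ ℱ r f
  have hC : (ENNReal.ofReal r)⁻¹ ≠ ∞ := ENNReal.inv_ne_top.2 (by simpa using hr0)
  have hdist := meas_lt_percentileMajorant_le (ℱ := ℱ) hfm hr0
  have hfin : ∀ᵐ x ∂μ, G x ≠ ∞ := ae_ne_top_of_meas_lt_le hfm.abs hC fun t _ ↦ hdist t
  calc eLpNorm (percentileMax μ ℱ r f) (ENNReal.ofReal p) μ
      ≤ eLpNorm (fun x ↦ (G x).toReal) (ENNReal.ofReal p) μ := by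
        refine eLpNorm_mono_ae_real ?_
        filter_upwards [hfin] with x hx
        rw [Real.norm_of_nonneg (percentileMax_nonneg hr1 x), ← ENNReal.ofReal_le_iff_le_toReal hx]
        exact ofReal_percentileMax_le_percentileMajorant hr1 x
    _ ≤ (ENNReal.ofReal r)⁻¹ ^ (1 / p) * eLpNorm f (ENNReal.ofReal p) μ := by
        refine eLpNorm_le_of_meas_lt_le measurable_percentileMajorant.ennreal_toReal.aemeasurable
          hfm hC (fun t ht ↦ (measure_mono fun x (hx : t < ‖(G x).toReal‖) ↦ ?_).trans (hdist t))
          hp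
        rw [Real.norm_of_nonneg ENNReal.toReal_nonneg] at hx
        exact (ENNReal.ofReal_lt_ofReal_iff'.2 ⟨hx, ht.trans hx⟩).trans_le ENNReal.ofReal_toReal_le
    _ = ENNReal.ofReal (r ^ (-(1 / p))) * eLpNorm f (ENNReal.ofReal p) μ := by
        rw [← ENNReal.ofReal_inv_of_pos hr0, ENNReal.ofReal_rpow_of_pos (inv_pos.2 hr0),
          Real.inv_rpow hr0.le, ← Real.rpow_neg hr0.le]

theorem stmt1 {Ω : Type*} {m0 : MeasurableSpace Ω} (μ : Measure Ω) [IsProbabilityMeasure μ]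
    (ℱ : Filtration ℕ m0) (hgen : (⨆ k, (ℱ k : MeasurableSpace Ω)) = m0)
    (r : ℝ) (hr : r ∈ Set.Ioo (0 : ℝ) 1)
    (p : ℝ) (hp : 0 < p)
    (f : Ω → ℝ) (hf : MemLp f (ENNReal.ofReal p) μ) :
    eLpNorm (percentileMax μ ℱ r f) (ENNReal.ofReal p) μ ≤
      ENNReal.ofReal (r ^ (-(1 / p))) * eLpNorm f (ENNReal.ofReal p) μ :=
  stmt1_general μ ℱ r hr p hp f hf
end

section
/- Let (Ω, F, μ) be a probability space with a filtration {F_k}_{k≥0}, and let {ν_k}_{k≥0} be an increasing sparse sequence of stopping times. Define S_m := ⋃_{k≥0} {ν_k = m} for each m ≥ 0. Then the adapted sequence {S_m}_{m≥0} is 1/2-sparse. -/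
open MeasureTheory
open scoped ENNReal

/-- `ν` is a stopping time with values in `ℕ ∪ {∞}` with respect to the filtration `ℱ`. -/
def IsStoppingTimeE {Ω : Type*} {m0 : MeasurableSpace Ω} (ℱ : Filtration ℕ m0)
    (ν : Ω → ℕ∞) : Prop :=
  ∀ n : ℕ, MeasurableSet[ℱ n] {x | ν x ≤ (n : ℕ∞)}

/-- `A` belongs to the σ-algebra `F_ν` of the stopping time `ν`. -/
def MemStoppedSigma {Ω : Type*} {m0 : MeasurableSpace Ω} (ℱ : Filtration ℕ m0)
    (ν : Ω → ℕ∞) (A : Set Ω) : Prop :=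
  ∀ n : ℕ, MeasurableSet[ℱ n] (A ∩ {x | ν x ≤ (n : ℕ∞)})

/-- `{ν_k}` is an increasing sparse sequence of stopping times: each `ν k` is a stopping
time, the sequence is increasing, and for every `k` and every `A ⊆ {ν_k < ∞}` with
`A ∈ F_{ν_k}` one has `μ(A ∩ {ν_{k+1} < ∞}) ≤ μ(A)/2`. -/
def IsSparseStoppingSeq {Ω : Type*} {m0 : MeasurableSpace Ω} (μ : Measure Ω)
    (ℱ : Filtration ℕ m0) (ν : ℕ → Ω → ℕ∞) : Prop :=
  (∀ k, IsStoppingTimeE ℱ (ν k)) ∧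
  (∀ k x, ν k x ≤ ν (k + 1) x) ∧
  (∀ k (A : Set Ω), A ⊆ {x | ν k x ≠ ⊤} → MemStoppedSigma ℱ (ν k) A →
    μ (A ∩ {x | ν (k + 1) x ≠ ⊤}) ≤ μ A / 2)

/-- An adapted sequence of sets `{S_k}` is `η`-sparse: each `S_k` is `F_k`-measurable and
for every `F_k`-measurable `A ⊆ S_k` one has `μ(A \ ⋃_{m ≥ k+1} S_m) ≥ η μ(A)`. -/
def IsSparseAdaptedSeq {Ω : Type*} {m0 : MeasurableSpace Ω} (μ : Measure Ω)
    (ℱ : Filtration ℕ m0) (η : ℝ) (S : ℕ → Set Ω) : Prop :=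
  (∀ k, MeasurableSet[ℱ k] (S k)) ∧
  (∀ k (A : Set Ω), A ⊆ S k → MeasurableSet[ℱ k] A →
    ENNReal.ofReal η * μ A ≤ μ (A \ ⋃ m, ⋃ (_ : k + 1 ≤ m), S m))


/-!
Fix `A ⊆ S_m` in `F_m`. A point of `A` that lies in some later `S_n` has, by monotonicity, a last
index `k` with `ν_k = m`, and then `m < ν_{k+1} < ∞`. The pieces `A ∩ {ν_k = m < ν_{k+1}}` are
disjoint and belong to `F_{ν_k}`, so sparseness of `{ν_k}` bounds the measure of the returning
points by `μ(A)/2`, and the rest of `A` carries at least the other half.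
-/

open Set Function

lemma Monotone.exists_lt_eq_and_lt_succ {α : Type*} [LinearOrder α] {f : ℕ → α}
    (hf : Monotone f) {a : α} {i j : ℕ} (hi : f i = a) (hj : a < f j) :
    ∃ k < j, f k = a ∧ a < f (k + 1) := by
  classical
  subst hi
  have hex : ∃ r, f i < f r := ⟨j, hj⟩
  have hi_lt : i < Nat.find hex := by
    by_contra! h
    exact (Nat.find_spec hex).not_ge (hf h)
  -- `k + 1` is the first index at which `f` exceeds `f i`.
  obtain ⟨k, hk⟩ : ∃ k, Nat.find hex = k + 1 := Nat.exists_eq_add_one_of_ne_zero (by omega)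
  have hkj : k < j := by have := Nat.find_min' hex hj; omega
  have hk_le : f k ≤ f i := not_lt.mp (Nat.find_min hex (by omega))
  exact ⟨k, hkj, le_antisymm hk_le (hf (by omega)), hk ▸ Nat.find_spec hex⟩

lemma Monotone.eq_of_eq_and_lt_succ {α : Type*} [Preorder α] {f : ℕ → α} (hf : Monotone f)
    {a : α} {i j : ℕ} (hi : f i = a) (hi' : a < f (i + 1)) (hj : f j = a) (hj' : a < f (j + 1)) :
    i = j := by
  by_contra hne
  rcases Nat.lt_or_gt_of_ne hne with h | h
  · exact (hi'.trans_le (hj ▸ hf h)).false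
  · exact (hj'.trans_le (hi ▸ hf h)).false

section

variable {Ω : Type*} {m0 : MeasurableSpace Ω} {μ : Measure Ω} {ℱ : Filtration ℕ m0}

lemma IsStoppingTimeE.isStoppingTime {ν : Ω → ℕ∞} (hν : IsStoppingTimeE ℱ ν) :
    IsStoppingTime ℱ ν :=
  hν

lemma IsStoppingTimeE.measurableSet_eq {ν : Ω → ℕ∞} (hν : IsStoppingTimeE ℱ ν) (m : ℕ) :
    MeasurableSet[ℱ m] {x | ν x = m} :=
  hν.isStoppingTime.measurableSet_eq m

lemma IsStoppingTimeE.memStoppedSigma_inter_eq {ν : Ω → ℕ∞} (hν : IsStoppingTimeE ℱ ν) {m : ℕ}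
    {B : Set Ω} (hB : MeasurableSet[ℱ m] B) : MemStoppedSigma ℱ ν (B ∩ {x | ν x = m}) :=
  ((hν.isStoppingTime.measurableSet_inter_eq_iff B m).mpr (hB.inter (hν.measurableSet_eq m))).2

/-- For increasing `ν`, the points for which `k` is the last index with `ν k = m`. -/
def lastHitSet (ν : ℕ → Ω → ℕ∞) (m k : ℕ) : Set Ω :=
  {x | ν k x = m ∧ (m : ℕ∞) < ν (k + 1) x}

variable {ν : ℕ → Ω → ℕ∞}

lemma IsSparseStoppingSeq.monotone (hν : IsSparseStoppingSeq μ ℱ ν) (x : Ω) :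
    Monotone fun k => ν k x :=
  monotone_nat_of_le_succ (hν.2.1 · x)

lemma pairwise_disjoint_lastHitSet (hmono : ∀ x, Monotone fun k => ν k x) (m : ℕ) :
    Pairwise (Disjoint on lastHitSet ν m) := fun _ _ hij =>
  disjoint_left.mpr fun x hi hj => hij ((hmono x).eq_of_eq_and_lt_succ hi.1 hi.2 hj.1 hj.2)

lemma measurableSet_lastHitSet (hst : ∀ k, IsStoppingTimeE ℱ (ν k)) (m k : ℕ) :
    MeasurableSet[ℱ m] (lastHitSet ν m k) :=
  ((hst k).measurableSet_eq m).inter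
    ((hst (k + 1)).isStoppingTime.measurableSet_gt m)

lemma memStoppedSigma_inter_lastHitSet (hst : ∀ k, IsStoppingTimeE ℱ (ν k)) {m : ℕ} {A : Set Ω}
    (hA : MeasurableSet[ℱ m] A) (k : ℕ) : MemStoppedSigma ℱ (ν k) (A ∩ lastHitSet ν m k) := by
  have hrw : A ∩ lastHitSet ν m k = (A ∩ {x | (m : ℕ∞) < ν (k + 1) x}) ∩ {x | ν k x = m} := by
    ext x; simp only [lastHitSet, mem_inter_iff, mem_ofPred_eq]; tauto
  rw [hrw]
  exact (hst k).memStoppedSigma_inter_eq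
    (hA.inter ((hst (k + 1)).isStoppingTime.measurableSet_gt m))

lemma inter_iUnion_subset_iUnion_lastHitSet (hmono : ∀ x, Monotone fun k => ν k x) {m : ℕ}
    {A : Set Ω} (hA : A ⊆ ⋃ k, {x | ν k x = m}) :
    A ∩ (⋃ n, ⋃ (_ : m + 1 ≤ n), ⋃ k, {x | ν k x = (n : ℕ∞)}) ⊆
      ⋃ k, A ∩ lastHitSet ν m k ∩ {x | ν (k + 1) x ≠ ⊤} := by
  rintro x ⟨hxA, hxU⟩
  obtain ⟨i, hi⟩ := mem_iUnion.mp (hA hxA)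
  simp only [mem_iUnion, mem_ofPred_eq] at hxU
  obtain ⟨n, hmn, j, hj⟩ := hxU
  obtain ⟨k, hkj, hk, hk'⟩ := (hmono x).exists_lt_eq_and_lt_succ hi
    (show (m : ℕ∞) < ν j x by rw [hj]; exact_mod_cast hmn)
  have hfin : ν (k + 1) x ≠ ⊤ := ne_top_of_le_ne_top (by simp [hj]) (hmono x hkj)
  exact mem_iUnion.mpr ⟨k, ⟨hxA, hk, hk'⟩, hfin⟩

lemma IsSparseStoppingSeq.measure_iUnion_inter_lastHitSet_le (hν : IsSparseStoppingSeq μ ℱ ν)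
    {m : ℕ} {A : Set Ω} (hA : MeasurableSet[ℱ m] A) :
    μ (⋃ k, A ∩ lastHitSet ν m k ∩ {x | ν (k + 1) x ≠ ⊤}) ≤ μ A / 2 := by
  obtain ⟨hst, -, hsparse⟩ := id hν
  have hsub : ∀ k, A ∩ lastHitSet ν m k ⊆ {x | ν k x ≠ ⊤} := fun k x hx => by
    simp [hx.2.1]
  calc μ (⋃ k, A ∩ lastHitSet ν m k ∩ {x | ν (k + 1) x ≠ ⊤})
      ≤ ∑' k, μ (A ∩ lastHitSet ν m k ∩ {x | ν (k + 1) x ≠ ⊤}) := measure_iUnion_le _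
    _ ≤ ∑' k, μ (A ∩ lastHitSet ν m k) / 2 := ENNReal.tsum_le_tsum fun k =>
        hsparse k _ (hsub k) (memStoppedSigma_inter_lastHitSet hst hA k)
    _ = μ (⋃ k, A ∩ lastHitSet ν m k) / 2 := by
        have hdisj : Pairwise (Disjoint on fun k => A ∩ lastHitSet ν m k) := fun _ _ hij =>
          (pairwise_disjoint_lastHitSet hν.monotone m hij).mono
            inter_subset_right inter_subset_right
        have hmeas : ∀ k, MeasurableSet (A ∩ lastHitSet ν m k) := fun k =>
          ℱ.le m _ (hA.inter (measurableSet_lastHitSet hst m k))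
        rw [measure_iUnion hdisj hmeas]
        simp_rw [div_eq_mul_inv, ENNReal.tsum_mul_right]
    _ ≤ μ A / 2 := by gcongr; exact iUnion_subset fun k => inter_subset_left

end

lemma MeasureTheory.half_le_measure_diff_of_measure_inter_le {Ω : Type*} [MeasurableSpace Ω]
    {μ : Measure Ω} [IsFiniteMeasure μ] {A U : Set Ω} (h : μ (A ∩ U) ≤ μ A / 2) :
    μ A / 2 ≤ μ (A \ U) := by
  have hA : μ A ≤ μ A / 2 + μ (A \ U) :=
    (measure_le_inter_add_sdiff μ A U).trans (add_le_add_left h _)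
  rwa [← ENNReal.sub_half (measure_ne_top μ A), tsub_le_iff_left]

theorem stmt2 {Ω : Type*} {m0 : MeasurableSpace Ω} (μ : Measure Ω) [IsProbabilityMeasure μ]
    (ℱ : Filtration ℕ m0) (ν : ℕ → Ω → ℕ∞)
    (hν : IsSparseStoppingSeq μ ℱ ν) :
    IsSparseAdaptedSeq μ ℱ (1 / 2) (fun m => ⋃ k, {x | ν k x = (m : ℕ∞)}) := by
  refine ⟨fun m => .iUnion fun k => (hν.1 k).measurableSet_eq m,
    fun m A hAS hA => ?_⟩
  rw [ENNReal.ofReal_div_of_pos two_pos, ENNReal.ofReal_one, ENNReal.ofReal_ofNat, one_div,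
    ← ENNReal.div_eq_inv_mul]
  refine half_le_measure_diff_of_measure_inter_le ?_
  exact (measure_mono (inter_iUnion_subset_iUnion_lastHitSet hν.monotone hAS)).trans
    (hν.measure_iUnion_inter_lastHitSet_le hA)
end

section
/- Let (Ω, F, μ) be a probability space with a filtration {F_k}_{k≥0} of sub-σ-algebras whose union generates F, and fix r ∈ (0, 1/2]. There is a constant C depending only on r such that for every f ∈ L^∞(Ω) there exists a 1/2-sparse adapted sequence S = {S_k}_{k≥0} with ‖M f‖_{L^1(Ω)} ≤ C ‖M_S f‖_{L^1(Ω)}, where M f := sup_{k≥0} |E_k f| and M_S f := sup_{k≥0} 1_{S_k} |E_k f|. In particular ‖M f‖_{L^1(Ω)} ≤ C ‖A_S f‖_{L^1(Ω)}, where A_S f := Σ_{k≥0} 1_{S_k} |E_k f|. -/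
open MeasureTheory Filter Set Function
open scoped ENNReal NNReal Topology

/-!
Let `g k = E_k f`, bounded by `c`, and `λ_j = c 4^{-j}` (a smaller index is a higher level).
A point crosses level `j` at time `k` if `k` is the first time `|g|` exceeds `λ_{j+1}` and
`|g k| ≤ λ_j` at that time. Every point with `M f > 0` crosses some level `j` with `M f ≤ λ_j`,
so `∫ M f ≤ ∑_j λ_j μ(crossed j)`. A point crosses a given level at most once and crosses at
most one level at a given time, and a later crossing of the same point is of a higher level.

`S_k = ⋃_j S_{j,k}`, where `S_{j,k}` keeps the part of the crossing `(j, k)` on which the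
conditional probability given `F_k` of a later crossing of a higher level is at most `1/2`; this
is exactly what makes `S` sparse. A discarded crossing at level `j` is followed, with conditional
probability `> 1/2`, by a crossing of a level `i < j`, so the discarded mass at level `j` is at
most `2 ∑_{i<j} μ(crossed i)`. Since `∑_{j>i} λ_j = λ_i / 3`, the discarded part costs at most
two thirds of the finite sum `∑_j λ_j μ(crossed j)`, which is therefore at most
`3 ∑_{j,k} λ_j μ(S_{j,k})`. Finally, sparsity gives pairwise disjoint sets, each of at least half
the measure of `S_{j,k}`, on which `M_S f > λ_{j+1} = λ_j / 4`; hence `∫ M f ≤ 3 · 8 ∫ M_S f`.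
-/

namespace SparseDomination

section CondExpIndicator

variable {Ω : Type*} {m m0 : MeasurableSpace Ω} {μ : Measure Ω} [IsFiniteMeasure μ]
  {s A : Set Ω} {t : ℝ}

theorem setIntegral_condExp_indicator_one (hm : m ≤ m0) (hs : MeasurableSet s)
    (hA : MeasurableSet[m] A) : ∫ x in A, (μ[s.indicator 1 | m]) x ∂μ = μ.real (A ∩ s) := by
  rw [setIntegral_condExp (f := s.indicator 1) hm ((integrable_const 1).indicator hs) hA,
    setIntegral_indicator hs]
  simp

theorem measure_inter_le_of_condExp_indicator_le (hm : m ≤ m0) (hs : MeasurableSet s)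
    (hA : MeasurableSet[m] A) (ht : 0 ≤ t) (h : ∀ x ∈ A, (μ[s.indicator 1 | m]) x ≤ t) :
    μ (A ∩ s) ≤ ENNReal.ofReal t * μ A := by
  have hreal : μ.real (A ∩ s) ≤ t * μ.real A := by
    rw [← setIntegral_condExp_indicator_one hm hs hA, mul_comm, ← smul_eq_mul,
      ← setIntegral_const]
    exact setIntegral_mono_on integrable_condExp.integrableOn (integrableOn_const (by simp))
      (hm _ hA) h
  rw [← ofReal_measureReal, ← ofReal_measureReal, ← ENNReal.ofReal_mul ht]
  exact ENNReal.ofReal_le_ofReal hreal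

theorem le_measure_inter_of_le_condExp_indicator (hm : m ≤ m0) (hs : MeasurableSet s)
    (hA : MeasurableSet[m] A) (ht : 0 ≤ t) (h : ∀ x ∈ A, t ≤ (μ[s.indicator 1 | m]) x) :
    ENNReal.ofReal t * μ A ≤ μ (A ∩ s) := by
  have hreal : t * μ.real A ≤ μ.real (A ∩ s) := by
    rw [← setIntegral_condExp_indicator_one hm hs hA, mul_comm, ← smul_eq_mul,
      ← setIntegral_const]
    exact setIntegral_mono_on (integrableOn_const (by simp)) integrable_condExp.integrableOn
      (hm _ hA) h
  rw [← ofReal_measureReal, ← ofReal_measureReal, ← ENNReal.ofReal_mul ht]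
  exact ENNReal.ofReal_le_ofReal hreal

end CondExpIndicator

theorem half_mul_measure_le_measure_diff {Ω : Type*} {m0 : MeasurableSpace Ω} {μ : Measure Ω}
    [IsFiniteMeasure μ] {s A : Set Ω} (h : μ (A ∩ s) ≤ 2⁻¹ * μ A) :
    2⁻¹ * μ A ≤ μ (A \ s) := by
  rw [← ENNReal.div_eq_inv_mul, ← ENNReal.sub_half (measure_ne_top μ A), ← sdiff_self_inter]
  exact (tsub_le_tsub_left (by rwa [ENNReal.div_eq_inv_mul]) _).trans le_measure_sdiff

theorem ofReal_ciSup {ι : Sort*} [Nonempty ι] {u : ι → ℝ} (hu : BddAbove (range u)) :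
    ENNReal.ofReal (⨆ i, u i) = ⨆ i, ENNReal.ofReal (u i) :=
  Monotone.map_ciSup_of_continuousAt ENNReal.continuous_ofReal.continuousAt ENNReal.ofReal_mono hu

theorem ofReal_one_half : ENNReal.ofReal (1 / 2) = 2⁻¹ := by
  rw [ENNReal.ofReal_div_of_pos two_pos]
  simp

section Level

noncomputable def level (c : ℝ≥0) (j : ℕ) : ℝ≥0 := c * 4⁻¹ ^ j

variable (c : ℝ≥0)

theorem level_antitone : Antitone (level c) := fun _ _ h =>
  mul_le_mul_of_nonneg_left
    (pow_le_pow_of_le_one (by norm_num) (inv_le_one_of_one_le₀ (by norm_num)) h) zero_le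

theorem level_zero : level c 0 = c := by simp [level]

theorem level_eq_four_mul_level_succ (j : ℕ) : level c j = 4 * level c (j + 1) := by
  simp only [level, pow_succ]
  ring_nf

theorem tendsto_level : Tendsto (fun j => (level c j : ℝ)) atTop (𝓝 0) := by
  simpa [level] using (tendsto_pow_atTop_nhds_zero_of_lt_one (by norm_num)
    (by norm_num : (4⁻¹ : ℝ) < 1)).const_mul (c : ℝ)

theorem coe_level (j : ℕ) : (level c j : ℝ≥0∞) = c * 4⁻¹ ^ j := by
  simp [level, ENNReal.coe_inv, ENNReal.inv_pow]

theorem tsum_level_ne_top : ∑' j, (level c j : ℝ≥0∞) ≠ ∞ := by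
  simp_rw [coe_level, ENNReal.tsum_mul_left, ENNReal.tsum_geometric]
  exact ENNReal.mul_ne_top ENNReal.coe_ne_top
    (ENNReal.inv_ne_top.2 (tsub_pos_iff_lt.2 (ENNReal.inv_lt_one.2 (by norm_num))).ne')

theorem three_mul_tsum_level_gt (i : ℕ) :
    3 * ∑' j, (if i < j then (level c j : ℝ≥0∞) else 0) = level c i := by
  have hsum : ∑' n, (4⁻¹ : ℝ≥0∞) ^ (n + 1) = 3⁻¹ := by
    have h : (1 : ℝ≥0∞) - 4⁻¹ = 3 * 4⁻¹ := by
      refine ENNReal.sub_eq_of_eq_add (by simp) ?_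
      rw [← add_one_mul, show (3 : ℝ≥0∞) + 1 = 4 by norm_num,
        ENNReal.mul_inv_cancel (by norm_num) (by norm_num)]
    rw [ENNReal.tsum_geometric_add_one, h, ENNReal.mul_inv (by simp) (by simp), inv_inv,
      mul_left_comm, ENNReal.inv_mul_cancel (by simp) (by simp), mul_one]
  have hterm : ∀ n, (if i < n + (i + 1) then (level c (n + (i + 1)) : ℝ≥0∞) else 0) =
      level c i * 4⁻¹ ^ (n + 1) := fun n => by
    rw [if_pos (by omega), coe_level, coe_level, mul_assoc, ← pow_add]
    ring_nf
  rw [← ENNReal.summable.sum_add_tsum_nat_add' (k := i + 1),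
    Finset.sum_eq_zero fun j hj => if_neg (by simp at hj; omega), zero_add]
  simp_rw [hterm, ENNReal.tsum_mul_left, hsum]
  rw [mul_comm, mul_assoc, ENNReal.inv_mul_cancel (by simp) (by simp), mul_one]

end Level

section Crossing

variable {Ω : Type*} {m0 : MeasurableSpace Ω} {μ : Measure Ω} {ℱ : Filtration ℕ m0}
  {g : ℕ → Ω → ℝ} {c : ℝ≥0} {x : Ω} {i j k m : ℕ}

noncomputable def maximal (g : ℕ → Ω → ℝ) (x : Ω) : ℝ≥0∞ := ⨆ k, ENNReal.ofReal |g k x|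

def crossing (g : ℕ → Ω → ℝ) (c : ℝ≥0) (j k : ℕ) : Set Ω :=
  {x | (∀ i < k, |g i x| ≤ level c (j + 1)) ∧ (level c (j + 1) : ℝ) < |g k x| ∧
    |g k x| ≤ level c j}

def crossed (g : ℕ → Ω → ℝ) (c : ℝ≥0) (j : ℕ) : Set Ω := ⋃ k, crossing g c j k

theorem measurableSet_crossing (hg : Adapted ℱ g) (j k : ℕ) :
    MeasurableSet[ℱ k] (crossing g c j k) := by
  have habs : ∀ i ≤ k, Measurable[ℱ k] fun x => |g i x| := fun i hi =>
    measurable_abs.comp ((hg i).mono (ℱ.mono hi) le_rfl)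
  simp only [crossing, ofPred_and, ofPred_forall]
  exact (MeasurableSet.iInter fun i => MeasurableSet.iInter fun hi =>
    measurableSet_le (habs i hi.le) measurable_const).inter
      ((measurableSet_lt measurable_const (habs k le_rfl)).inter
        (measurableSet_le (habs k le_rfl) measurable_const))

theorem measurableSet_crossed (hg : Adapted ℱ g) (j : ℕ) : MeasurableSet (crossed g c j) :=
  .iUnion fun k => ℱ.le k _ (measurableSet_crossing hg j k)

theorem pairwise_disjoint_crossing_time (j : ℕ) : Pairwise (Disjoint on crossing g c j) :=
  (pairwise_disjoint_on _).2 fun k _ hkk' => disjoint_left.2 fun _ hx hx' =>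
    (hx'.1 k hkk').not_gt hx.2.1

theorem pairwise_disjoint_crossing_level (k : ℕ) :
    Pairwise (Disjoint on fun j => crossing g c j k) :=
  (pairwise_disjoint_on _).2 fun _ _ hjj' => disjoint_left.2 fun _ hx hx' =>
    (hx'.2.2.trans (NNReal.coe_le_coe.2 (level_antitone c hjj'))).not_gt hx.2.1

theorem lt_of_mem_crossing_of_lt (hkm : k < m) (hx : x ∈ crossing g c j k)
    (hx' : x ∈ crossing g c i m) : i < j := by
  by_contra! hji
  exact (hx'.1 k hkm |>.trans (NNReal.coe_le_coe.2 (level_antitone c (by omega)))).not_gt hx.2.1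

theorem measure_crossed_eq_tsum (hg : Adapted ℱ g) (j : ℕ) :
    μ (crossed g c j) = ∑' k, μ (crossing g c j k) :=
  measure_iUnion (pairwise_disjoint_crossing_time j) fun k =>
    ℱ.le k _ (measurableSet_crossing hg j k)

theorem exists_mem_crossed_of_abs_le (hx : ∀ k, |g k x| ≤ c) (hk : 0 < |g k x|) :
    ∃ j, x ∈ crossed g c j ∧ ∀ i, |g i x| ≤ level c j := by
  classical
  have hexceeds : ∃ n, ∃ i, (level c n : ℝ) < |g i x| :=
    ((tendsto_level c).eventually (gt_mem_nhds hk)).exists.imp fun _ hn => ⟨k, hn⟩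
  obtain ⟨j, hj⟩ : ∃ j, Nat.find hexceeds = j + 1 := by
    refine Nat.exists_eq_succ_of_ne_zero fun h0 => ?_
    obtain ⟨i, hi⟩ := h0 ▸ Nat.find_spec hexceeds
    exact (hx i).not_gt (by simpa [level_zero] using hi)
  have hbelow : ∀ i, |g i x| ≤ level c j := by
    simpa using Nat.find_min hexceeds (hj ▸ j.lt_succ_self)
  have hfirst : ∃ i, (level c (j + 1) : ℝ) < |g i x| := hj ▸ Nat.find_spec hexceeds
  refine ⟨j, mem_iUnion.2 ⟨Nat.find hfirst, fun i hi => ?_, Nat.find_spec hfirst, hbelow _⟩,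
    hbelow⟩
  exact not_lt.1 (Nat.find_min hfirst hi)

theorem maximal_le_tsum_indicator_crossed (hx : ∀ k, |g k x| ≤ c) :
    maximal g x ≤ ∑' j, (crossed g c j).indicator (fun _ => (level c j : ℝ≥0∞)) x := by
  refine iSup_le fun k => ?_
  rcases (abs_nonneg (g k x)).eq_or_lt with h0 | hpos
  · simp [← h0]
  obtain ⟨j, hxj, hle⟩ := exists_mem_crossed_of_abs_le hx hpos
  calc ENNReal.ofReal |g k x| ≤ level c j := by
        rw [← ENNReal.ofReal_coe_nnreal]
        exact ENNReal.ofReal_le_ofReal (hle k)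
    _ = (crossed g c j).indicator (fun _ => (level c j : ℝ≥0∞)) x :=
        (indicator_of_mem hxj (fun _ => (level c j : ℝ≥0∞))).symm
    _ ≤ _ := ENNReal.le_tsum j

theorem lintegral_maximal_le_tsum_level_mul_crossed (hg : Adapted ℱ g)
    (hbd : ∀ᵐ x ∂μ, ∀ k, |g k x| ≤ c) :
    ∫⁻ x, maximal g x ∂μ ≤ ∑' j, level c j * μ (crossed g c j) := calc
  ∫⁻ x, maximal g x ∂μ
      ≤ ∫⁻ x, ∑' j, (crossed g c j).indicator (fun _ => (level c j : ℝ≥0∞)) x ∂μ :=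
    lintegral_mono_ae <| hbd.mono fun _ => maximal_le_tsum_indicator_crossed
  _ = ∑' j, level c j * μ (crossed g c j) := by
    rw [lintegral_tsum fun j =>
      (measurable_const.indicator (measurableSet_crossed hg j)).aemeasurable]
    simp_rw [lintegral_indicator_const (measurableSet_crossed hg _)]

end Crossing

section Selection

variable {Ω : Type*} {m0 : MeasurableSpace Ω} {μ : Measure Ω} {ℱ : Filtration ℕ m0}
  {g : ℕ → Ω → ℝ} {c : ℝ≥0} {x : Ω} {A : Set Ω} {j k m : ℕ}

def laterCrossings (g : ℕ → Ω → ℝ) (c : ℝ≥0) (j k : ℕ) : Set Ω :=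
  ⋃ m, ⋃ (_ : k < m), ⋃ i, ⋃ (_ : i < j), crossing g c i m

def selected (μ : Measure Ω) (ℱ : Filtration ℕ m0) (g : ℕ → Ω → ℝ) (c : ℝ≥0) (j k : ℕ) :
    Set Ω :=
  crossing g c j k ∩ {x | (μ[(laterCrossings g c j k).indicator (1 : Ω → ℝ) | ℱ k]) x ≤ 1 / 2}

def sparseFamily (μ : Measure Ω) (ℱ : Filtration ℕ m0) (g : ℕ → Ω → ℝ) (c : ℝ≥0) (k : ℕ) :
    Set Ω :=
  ⋃ j, selected μ ℱ g c j k

def lastSelected (μ : Measure Ω) (ℱ : Filtration ℕ m0) (g : ℕ → Ω → ℝ) (c : ℝ≥0) (j k : ℕ) :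
    Set Ω :=
  selected μ ℱ g c j k \ ⋃ m, ⋃ (_ : k < m), sparseFamily μ ℱ g c m

noncomputable def sparseMaximal (μ : Measure Ω) (ℱ : Filtration ℕ m0) (g : ℕ → Ω → ℝ) (c : ℝ≥0)
    (x : Ω) : ℝ≥0∞ :=
  ⨆ k, (sparseFamily μ ℱ g c k).indicator (fun z => ENNReal.ofReal |g k z|) x

theorem measurableSet_laterCrossings (hg : Adapted ℱ g) (j k : ℕ) :
    MeasurableSet (laterCrossings g c j k) :=
  .iUnion fun m => .iUnion fun _ => .iUnion fun i => .iUnion fun _ =>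
    ℱ.le m _ (measurableSet_crossing hg i m)

theorem measurableSet_selected (hg : Adapted ℱ g) (j k : ℕ) :
    MeasurableSet[ℱ k] (selected μ ℱ g c j k) :=
  (measurableSet_crossing hg j k).inter
    (measurableSet_le stronglyMeasurable_condExp.measurable measurable_const)

theorem measurableSet_sparseFamily (hg : Adapted ℱ g) (k : ℕ) :
    MeasurableSet[ℱ k] (sparseFamily μ ℱ g c k) :=
  .iUnion fun j => measurableSet_selected hg j k

theorem measurableSet_iUnion_sparseFamily_gt (hg : Adapted ℱ g) (k : ℕ) :
    MeasurableSet (⋃ m, ⋃ (_ : k < m), sparseFamily μ ℱ g c m) :=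
  .iUnion fun m => .iUnion fun _ => ℱ.le m _ (measurableSet_sparseFamily hg m)

theorem measurableSet_lastSelected (hg : Adapted ℱ g) (j k : ℕ) :
    MeasurableSet (lastSelected μ ℱ g c j k) :=
  (ℱ.le k _ (measurableSet_selected hg j k)).diff (measurableSet_iUnion_sparseFamily_gt hg k)

theorem selected_subset_crossing : selected μ ℱ g c j k ⊆ crossing g c j k :=
  inter_subset_left

theorem laterCrossings_subset_iUnion_crossed :
    laterCrossings g c j k ⊆ ⋃ i, ⋃ (_ : i < j), crossed g c i := by
  simp only [laterCrossings, crossed, iUnion_subset_iff]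
  exact fun m _ i hi => subset_iUnion₂_of_subset i hi (subset_iUnion _ m)

theorem mem_laterCrossings (hkm : k < m) (hx : x ∈ crossing g c j k)
    (hx' : x ∈ sparseFamily μ ℱ g c m) : x ∈ laterCrossings g c j k := by
  obtain ⟨i, hi⟩ := mem_iUnion.1 hx'
  have hxi := selected_subset_crossing hi
  exact mem_iUnion₂.2 ⟨m, hkm, mem_iUnion₂.2 ⟨i, lt_of_mem_crossing_of_lt hkm hx hxi, hxi⟩⟩

theorem pairwise_disjoint_lastSelected :
    Pairwise (Disjoint on fun p : ℕ × ℕ => lastSelected μ ℱ g c p.1 p.2) := by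
  rintro ⟨j, k⟩ ⟨j', k'⟩ hne
  refine disjoint_left.2 fun x hx hx' => ?_
  rcases lt_trichotomy k k' with h | rfl | h
  · exact hx.2 (mem_iUnion₂.2 ⟨k', h, mem_iUnion.2 ⟨j', hx'.1⟩⟩)
  · exact disjoint_left.1 (pairwise_disjoint_crossing_level k fun hj => hne (Prod.ext hj rfl))
      (selected_subset_crossing hx.1) (selected_subset_crossing hx'.1)
  · exact hx'.2 (mem_iUnion₂.2 ⟨k, h, mem_iUnion.2 ⟨j, hx.1⟩⟩)

theorem level_succ_le_sparseMaximal (hx : x ∈ selected μ ℱ g c j k) :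
    (level c (j + 1) : ℝ≥0∞) ≤ sparseMaximal μ ℱ g c x := by
  refine le_iSup_of_le k ?_
  rw [indicator_of_mem (show x ∈ sparseFamily μ ℱ g c k from mem_iUnion.2 ⟨j, hx⟩),
    ← ENNReal.ofReal_coe_nnreal]
  exact ENNReal.ofReal_le_ofReal hx.1.2.1.le

variable [IsFiniteMeasure μ]

theorem measure_inter_laterCrossings_le (hg : Adapted ℱ g) (hA : MeasurableSet[ℱ k] A)
    (hAs : A ⊆ selected μ ℱ g c j k) : μ (A ∩ laterCrossings g c j k) ≤ 2⁻¹ * μ A := by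
  rw [← ofReal_one_half]
  exact measure_inter_le_of_condExp_indicator_le (ℱ.le k) (measurableSet_laterCrossings hg j k)
    hA (by norm_num) fun _ hx => (hAs hx).2

theorem half_mul_measure_le_measure_diff_later (hg : Adapted ℱ g) (hA : MeasurableSet[ℱ k] A)
    (hAs : A ⊆ selected μ ℱ g c j k) :
    2⁻¹ * μ A ≤ μ (A \ ⋃ m, ⋃ (_ : k < m), sparseFamily μ ℱ g c m) := by
  refine half_mul_measure_le_measure_diff
    ((measure_mono ?_).trans (measure_inter_laterCrossings_le hg hA hAs))
  rintro x ⟨hxA, hx⟩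
  obtain ⟨m, hkm, hxm⟩ := mem_iUnion₂.1 hx
  exact ⟨hxA, mem_laterCrossings hkm (selected_subset_crossing (hAs hxA)) hxm⟩

theorem isSparseAdaptedSeq_sparseFamily (hg : Adapted ℱ g) :
    IsSparseAdaptedSeq μ ℱ (1 / 2) (sparseFamily μ ℱ g c) := by
  refine ⟨measurableSet_sparseFamily hg, fun k A hAS hA => ?_⟩
  change _ ≤ μ (A \ ⋃ m, ⋃ (_ : k < m), sparseFamily μ ℱ g c m)
  set U := ⋃ m, ⋃ (_ : k < m), sparseFamily μ ℱ g c m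
  have hA_eq : A = ⋃ j, A ∩ selected μ ℱ g c j k := by
    rw [← inter_iUnion]
    exact (inter_eq_self_of_subset_left hAS).symm
  have hpiece : ∀ j, (A ∩ selected μ ℱ g c j k) \ U ⊆ crossing g c j k := fun _ =>
    sdiff_subset.trans (inter_subset_right.trans selected_subset_crossing)
  have hdisj : Pairwise (Disjoint on fun j => (A ∩ selected μ ℱ g c j k) \ U) :=
    (pairwise_disjoint_crossing_level k).mono fun i j h => h.mono (hpiece i) (hpiece j)
  have hmeas : ∀ j, MeasurableSet ((A ∩ selected μ ℱ g c j k) \ U) := fun j =>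
    (ℱ.le k _ (hA.inter (measurableSet_selected hg j k))).diff
      (measurableSet_iUnion_sparseFamily_gt hg k)
  calc ENNReal.ofReal (1 / 2) * μ A
      ≤ 2⁻¹ * ∑' j, μ (A ∩ selected μ ℱ g c j k) := by
        rw [ofReal_one_half]
        gcongr
        conv_lhs => rw [hA_eq]
        exact measure_iUnion_le _
    _ = ∑' j, 2⁻¹ * μ (A ∩ selected μ ℱ g c j k) := ENNReal.tsum_mul_left.symm
    _ ≤ ∑' j, μ ((A ∩ selected μ ℱ g c j k) \ U) := ENNReal.tsum_le_tsum fun j =>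
        half_mul_measure_le_measure_diff_later hg (hA.inter (measurableSet_selected hg j k))
          inter_subset_right
    _ = μ (A \ U) := by rw [← measure_iUnion hdisj hmeas, ← iUnion_sdiff, ← hA_eq]

theorem measure_selected_le_two_mul_lastSelected (hg : Adapted ℱ g) (j k : ℕ) :
    μ (selected μ ℱ g c j k) ≤ 2 * μ (lastSelected μ ℱ g c j k) :=
  (ENNReal.inv_mul_le_iff two_ne_zero ENNReal.ofNat_ne_top).1
    (half_mul_measure_le_measure_diff_later hg (measurableSet_selected hg j k) subset_rfl)

theorem measure_crossing_diff_selected_le (hg : Adapted ℱ g) (j k : ℕ) :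
    μ (crossing g c j k \ selected μ ℱ g c j k) ≤
      2 * μ (crossing g c j k ∩ ⋃ i, ⋃ (_ : i < j), crossed g c i) := by
  set R := crossing g c j k \ selected μ ℱ g c j k
  have hR : MeasurableSet[ℱ k] R :=
    (measurableSet_crossing hg j k).diff (measurableSet_selected hg j k)
  have hhalf : 2⁻¹ * μ R ≤ μ (R ∩ laterCrossings g c j k) := by
    rw [← ofReal_one_half]
    exact le_measure_inter_of_le_condExp_indicator (ℱ.le k) (measurableSet_laterCrossings hg j k)
      hR (by norm_num) fun x hx => (not_le.1 fun h => hx.2 ⟨hx.1, h⟩).le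
  refine (ENNReal.inv_mul_le_iff two_ne_zero ENNReal.ofNat_ne_top).1 (hhalf.trans ?_)
  exact measure_mono (inter_subset_inter sdiff_subset laterCrossings_subset_iUnion_crossed)

theorem measure_crossed_le (hg : Adapted ℱ g) (j : ℕ) :
    μ (crossed g c j) ≤ ∑' k, μ (selected μ ℱ g c j k) +
      2 * ∑' i, if i < j then μ (crossed g c i) else 0 := by
  set Z := ⋃ i, ⋃ (_ : i < j), crossed g c i
  have hZ : MeasurableSet Z := .iUnion fun i => .iUnion fun _ => measurableSet_crossed hg i
  have hsplit : ∀ k, μ (crossing g c j k) =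
      μ (selected μ ℱ g c j k) + μ (crossing g c j k \ selected μ ℱ g c j k) := fun k => by
    rw [← measure_inter_add_sdiff _ (ℱ.le k _ (measurableSet_selected hg j k)),
      inter_eq_self_of_subset_right selected_subset_crossing]
  have hμZ : μ Z ≤ ∑' i, if i < j then μ (crossed g c i) else 0 :=
    (measure_iUnion_le _).trans (ENNReal.tsum_le_tsum fun i => by split_ifs with h <;> simp [h])
  calc μ (crossed g c j) = ∑' k, μ (crossing g c j k) := measure_crossed_eq_tsum hg j
    _ ≤ ∑' k, (μ (selected μ ℱ g c j k) + 2 * μ (crossing g c j k ∩ Z)) :=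
        ENNReal.tsum_le_tsum fun k =>
          (hsplit k).trans_le (add_le_add le_rfl (measure_crossing_diff_selected_le hg j k))
    _ = ∑' k, μ (selected μ ℱ g c j k) + 2 * μ (crossed g c j ∩ Z) := by
        rw [ENNReal.tsum_add, ENNReal.tsum_mul_left, crossed, iUnion_inter,
          measure_iUnion ((pairwise_disjoint_crossing_time j).mono fun _ _ h =>
            h.mono inter_subset_left inter_subset_left)
            fun k => (ℱ.le k _ (measurableSet_crossing hg j k)).inter hZ]
    _ ≤ _ := by
        gcongr
        exact (measure_mono inter_subset_right).trans hμZ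

theorem tsum_level_mul_measure_crossed_le (hg : Adapted ℱ g) :
    ∑' j, level c j * μ (crossed g c j) ≤
      3 * ∑' j, level c j * ∑' k, μ (selected μ ℱ g c j k) := by
  set a := fun j => μ (crossed g c j)
  set A := ∑' j, (level c j : ℝ≥0∞) * a j
  set S := ∑' j, (level c j : ℝ≥0∞) * ∑' k, μ (selected μ ℱ g c j k)
  have hA : A ≠ ∞ := by
    refine ne_top_of_le_ne_top
      (ENNReal.mul_ne_top (tsum_level_ne_top c) (measure_ne_top μ univ)) ?_
    rw [← ENNReal.tsum_mul_right]
    exact ENNReal.tsum_le_tsum fun j => mul_le_mul_right (measure_mono (subset_univ _)) _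
  have hswap : ∑' j, (level c j : ℝ≥0∞) * ∑' i, (if i < j then a i else 0) =
      ∑' i, a i * ∑' j, if i < j then (level c j : ℝ≥0∞) else 0 := by
    simp_rw [← ENNReal.tsum_mul_left, mul_ite, mul_zero]
    rw [ENNReal.tsum_comm]
    simp_rw [mul_comm]
  have key : 2 * A + A ≤ 2 * A + 3 * S := calc
    2 * A + A = 3 * A := by ring
    _ ≤ 3 * ∑' j, (level c j : ℝ≥0∞) *
        (∑' k, μ (selected μ ℱ g c j k) + 2 * ∑' i, if i < j then a i else 0) :=
      mul_le_mul_right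
        (ENNReal.tsum_le_tsum fun j => mul_le_mul_right (measure_crossed_le hg j) _) 3
    _ = 3 * S + 2 * ∑' i, a i * (3 * ∑' j, if i < j then (level c j : ℝ≥0∞) else 0) := by
      simp_rw [mul_add, ENNReal.tsum_add, mul_left_comm _ (2 : ℝ≥0∞), ENNReal.tsum_mul_left,
        hswap, mul_left_comm (a _) (3 : ℝ≥0∞), ENNReal.tsum_mul_left]
      ring
    _ = 2 * A + 3 * S := by
      simp_rw [three_mul_tsum_level_gt, mul_comm (a _)]
      ring
  exact ENNReal.le_of_add_le_add_left (ENNReal.mul_ne_top (by simp) hA) key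

theorem tsum_level_mul_measure_selected_le (hg : Adapted ℱ g) :
    ∑' j, level c j * ∑' k, μ (selected μ ℱ g c j k) ≤
      8 * ∫⁻ x, sparseMaximal μ ℱ g c x ∂μ := calc
  ∑' j, level c j * ∑' k, μ (selected μ ℱ g c j k)
      = ∑' p : ℕ × ℕ, 4 * level c (p.1 + 1) * μ (selected μ ℱ g c p.1 p.2) := by
    rw [ENNReal.tsum_prod
      (f := fun j k => 4 * (level c (j + 1) : ℝ≥0∞) * μ (selected μ ℱ g c j k))]
    refine tsum_congr fun j => ?_
    rw [← ENNReal.tsum_mul_left, level_eq_four_mul_level_succ c j, ENNReal.coe_mul]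
    rfl
  _ ≤ ∑' p : ℕ × ℕ, 4 * level c (p.1 + 1) * (2 * μ (lastSelected μ ℱ g c p.1 p.2)) :=
    ENNReal.tsum_le_tsum fun p =>
      mul_le_mul_right (measure_selected_le_two_mul_lastSelected hg p.1 p.2) _
  _ = 8 * ∑' p : ℕ × ℕ, level c (p.1 + 1) * μ (lastSelected μ ℱ g c p.1 p.2) := by
    rw [← ENNReal.tsum_mul_left]
    congr 1 with p
    ring
  _ ≤ 8 * ∑' p : ℕ × ℕ, ∫⁻ x in lastSelected μ ℱ g c p.1 p.2, sparseMaximal μ ℱ g c x ∂μ := by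
    refine mul_le_mul_right (ENNReal.tsum_le_tsum fun p => ?_) 8
    rw [← setLIntegral_const]
    exact setLIntegral_mono' (measurableSet_lastSelected hg p.1 p.2) fun x hx =>
      level_succ_le_sparseMaximal hx.1
  _ = 8 * ∫⁻ x in ⋃ p : ℕ × ℕ, lastSelected μ ℱ g c p.1 p.2, sparseMaximal μ ℱ g c x ∂μ := by
    rw [lintegral_iUnion (s := fun p : ℕ × ℕ => lastSelected μ ℱ g c p.1 p.2)
      (fun p => measurableSet_lastSelected hg p.1 p.2) pairwise_disjoint_lastSelected]
  _ ≤ 8 * ∫⁻ x, sparseMaximal μ ℱ g c x ∂μ := mul_le_mul_right (setLIntegral_le_lintegral _ _) 8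

theorem lintegral_maximal_le_sparseMaximal (hg : Adapted ℱ g)
    (hbd : ∀ᵐ x ∂μ, ∀ k, |g k x| ≤ c) :
    ∫⁻ x, maximal g x ∂μ ≤ 24 * ∫⁻ x, sparseMaximal μ ℱ g c x ∂μ := calc
  ∫⁻ x, maximal g x ∂μ ≤ ∑' j, level c j * μ (crossed g c j) :=
    lintegral_maximal_le_tsum_level_mul_crossed hg hbd
  _ ≤ 3 * ∑' j, level c j * ∑' k, μ (selected μ ℱ g c j k) :=
    tsum_level_mul_measure_crossed_le hg
  _ ≤ 3 * (8 * ∫⁻ x, sparseMaximal μ ℱ g c x ∂μ) :=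
    mul_le_mul_right (tsum_level_mul_measure_selected_le hg) 3
  _ = 24 * ∫⁻ x, sparseMaximal μ ℱ g c x ∂μ := by
    rw [← mul_assoc]
    norm_num

end Selection

end SparseDomination

open SparseDomination

theorem stmt4_general {Ω : Type*} {m0 : MeasurableSpace Ω} (μ : Measure Ω) [IsProbabilityMeasure μ]
    (ℱ : Filtration ℕ m0) :
    ∃ C : ℝ, 0 < C ∧
      ∀ f : Ω → ℝ, MemLp f ⊤ μ →
        ∃ S : ℕ → Set Ω, IsSparseAdaptedSeq μ ℱ (1 / 2) S ∧
          -- ‖M f‖_{L¹} ≤ C ‖M_S f‖_{L¹}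
          (∫⁻ x, ENNReal.ofReal (⨆ k : ℕ, |(μ[f | ℱ k]) x|) ∂μ) ≤
            ENNReal.ofReal C *
              ∫⁻ x, ENNReal.ofReal
                (⨆ k : ℕ, Set.indicator (S k) (fun z => |(μ[f | ℱ k]) z|) x) ∂μ ∧
          -- ‖M f‖_{L¹} ≤ C ‖A_S f‖_{L¹}
          (∫⁻ x, ENNReal.ofReal (⨆ k : ℕ, |(μ[f | ℱ k]) x|) ∂μ) ≤
            ENNReal.ofReal C *
              ∫⁻ x, (∑' k : ℕ,
                Set.indicator (S k) (fun z => ENNReal.ofReal |(μ[f | ℱ k]) z|) x) ∂μ := by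
  refine ⟨24, by norm_num, fun f hf => ?_⟩
  set g : ℕ → Ω → ℝ := fun k => μ[f | ℱ k]
  set c := (lpNorm f ∞ μ).toNNReal
  have hg : Adapted ℱ g := fun k => stronglyMeasurable_condExp.measurable
  have hbd : ∀ᵐ x ∂μ, ∀ k, |g k x| ≤ c := ae_all_iff.2 fun k =>
    ae_bdd_abs_condExp_of_ae_bdd_abs <| (ae_le_lpNorm_exponent_top hf).mono fun x hx =>
      (Real.norm_eq_abs (f x) ▸ hx).trans (Real.le_coe_toNNReal _)
  set S := sparseFamily μ ℱ g c
  have hM : ∀ᵐ x ∂μ, ENNReal.ofReal (⨆ k, |g k x|) = maximal g x :=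
    hbd.mono fun x hx => ofReal_ciSup ⟨c, forall_mem_range.2 hx⟩
  have hMS : ∀ᵐ x ∂μ, ENNReal.ofReal (⨆ k, (S k).indicator (fun z => |g k z|) x) =
      sparseMaximal μ ℱ g c x := hbd.mono fun x hx => by
    rw [ofReal_ciSup ⟨c, forall_mem_range.2 fun k =>
      (indicator_le_self' (fun _ _ => abs_nonneg _) x).trans (hx k)⟩]
    exact iSup_congr fun k => (congrFun (indicator_comp_of_zero ENNReal.ofReal_zero) x).symm
  have hdom : ∫⁻ x, ENNReal.ofReal (⨆ k, |g k x|) ∂μ ≤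
      ENNReal.ofReal 24 * ∫⁻ x, ENNReal.ofReal (⨆ k, (S k).indicator (fun z => |g k z|) x) ∂μ := by
    rw [lintegral_congr_ae hM, lintegral_congr_ae hMS, ENNReal.ofReal_ofNat]
    exact lintegral_maximal_le_sparseMaximal hg hbd
  refine ⟨S, isSparseAdaptedSeq_sparseFamily hg, hdom, hdom.trans (mul_le_mul_right ?_ _)⟩
  exact lintegral_mono_ae <| hMS.mono fun x hx => hx.trans_le (iSup_le fun k => ENNReal.le_tsum k)

theorem stmt4 {Ω : Type*} {m0 : MeasurableSpace Ω} (μ : Measure Ω) [IsProbabilityMeasure μ]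
    (ℱ : Filtration ℕ m0) (hgen : (⨆ k, (ℱ k : MeasurableSpace Ω)) = m0)
    (r : ℝ) (hr : 0 < r) (hr' : r ≤ 1 / 2) :
    ∃ C : ℝ, 0 < C ∧
      ∀ f : Ω → ℝ, MemLp f ⊤ μ →
        ∃ S : ℕ → Set Ω, IsSparseAdaptedSeq μ ℱ (1 / 2) S ∧
          -- ‖M f‖_{L¹} ≤ C ‖M_S f‖_{L¹}
          (∫⁻ x, ENNReal.ofReal (⨆ k : ℕ, |(μ[f | ℱ k]) x|) ∂μ) ≤
            ENNReal.ofReal C *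
              ∫⁻ x, ENNReal.ofReal
                (⨆ k : ℕ, Set.indicator (S k) (fun z => |(μ[f | ℱ k]) z|) x) ∂μ ∧
          -- ‖M f‖_{L¹} ≤ C ‖A_S f‖_{L¹}
          (∫⁻ x, ENNReal.ofReal (⨆ k : ℕ, |(μ[f | ℱ k]) x|) ∂μ) ≤
            ENNReal.ofReal C *
              ∫⁻ x, (∑' k : ℕ,
                Set.indicator (S k) (fun z => ENNReal.ofReal |(μ[f | ℱ k]) z|) x) ∂μ :=
  stmt4_general μ ℱ
end

section
/- Let (Ω, F, μ) be a probability space with a filtration {F_k}_{k≥0} of sub-σ-algebras whose union generates F. For every f ∈ L^1(Ω) and every 1/2-sparse adapted sequence S = {S_k}_{k≥0}, one has ‖A_S f‖_{L^1(Ω)} ≤ 2 ‖M f‖_{L^1(Ω)}, where A_S f := Σ_{k≥0} 1_{S_k} |E_k f| and M f := sup_{k≥0} |E_k f| is Doob's maximal function. -/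
/-!
Let `L_k = lastVisit S k ⊆ S_k` be the set of points whose last visit to the sequence `S` is at
time `k`; these sets are pairwise disjoint. Sparseness says `μ (A ∩ S_k) ≤ 2 μ (A ∩ L_k)` for every
`F_k`-measurable `A`, and since `|E_k f|` is `F_k`-measurable this upgrades to
`∫_{S_k} |E_k f| ≤ 2 ∫_{L_k} |E_k f| ≤ 2 ∫_{L_k} M f`. Summing over the disjoint `L_k` gives the
bound. That `M f` dominates every `|E_k f|` (rather than being a junk supremum) follows from Lévy's
upward theorem: `E_k f` converges a.e., so it is a.e. bounded.
-/

open MeasureTheory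
open scoped ENNReal

namespace MeasureTheory

variable {Ω : Type*} {m m0 : MeasurableSpace Ω} {μ : Measure Ω}

theorem setLIntegral_le_mul_of_measure_inter_le (hm : m ≤ m0) {s t : Set Ω} {c : ℝ≥0∞}
    (h : ∀ A, MeasurableSet[m] A → μ (A ∩ s) ≤ c * μ (A ∩ t)) {φ : Ω → ℝ≥0∞}
    (hφ : Measurable[m] φ) :
    ∫⁻ x in s, φ x ∂μ ≤ c * ∫⁻ x in t, φ x ∂μ := by
  have htrim : (μ.restrict s).trim hm ≤ c • (μ.restrict t).trim hm := by
    refine Measure.le_iff.2 fun A hA => ?_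
    rw [Measure.smul_apply, trim_measurableSet_eq hm hA, trim_measurableSet_eq hm hA,
      Measure.restrict_apply (hm A hA), Measure.restrict_apply (hm A hA), smul_eq_mul]
    exact h A hA
  calc ∫⁻ x in s, φ x ∂μ = ∫⁻ x, φ x ∂(μ.restrict s).trim hm := (lintegral_trim hm hφ).symm
    _ ≤ ∫⁻ x, φ x ∂(c • (μ.restrict t).trim hm) := lintegral_mono' htrim le_rfl
    _ = c * ∫⁻ x in t, φ x ∂μ := by rw [lintegral_smul_measure, lintegral_trim hm hφ, smul_eq_mul]

theorem ae_abs_condExp_le_iSup [IsFiniteMeasure μ] (ℱ : Filtration ℕ m0) (f : Ω → ℝ) :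
    ∀ᵐ x ∂μ, ∀ k, |(μ[f | ℱ k]) x| ≤ ⨆ j, |(μ[f | ℱ j]) x| := by
  filter_upwards [tendsto_ae_condExp (μ := μ) (ℱ := ℱ) f] with x hx k
  exact le_ciSup hx.abs.bddAbove_range k

end MeasureTheory

def lastVisit {Ω : Type*} (S : ℕ → Set Ω) (k : ℕ) : Set Ω :=
  S k \ ⋃ m, ⋃ (_ : k + 1 ≤ m), S m

theorem pairwise_disjoint_lastVisit {Ω : Type*} (S : ℕ → Set Ω) :
    Pairwise (Function.onFun Disjoint (lastVisit S)) := by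
  refine pairwise_disjoint_on _ |>.2 fun i j hij => Set.disjoint_left.2 fun x hxi hxj => ?_
  exact hxi.2 (Set.mem_biUnion hij hxj.1)

namespace IsSparseAdaptedSeq

variable {Ω : Type*} {m0 : MeasurableSpace Ω} {μ : Measure Ω} {ℱ : Filtration ℕ m0} {η : ℝ}
  {S : ℕ → Set Ω}

theorem measurableSet_lastVisit (hS : IsSparseAdaptedSeq μ ℱ η S) (k : ℕ) :
    MeasurableSet (lastVisit S k) :=
  (ℱ.le k _ (hS.1 k)).diff <| .iUnion fun m => .iUnion fun _ => ℱ.le m _ (hS.1 m)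

theorem measure_inter_le (hS : IsSparseAdaptedSeq μ ℱ η S) (hη : 0 < η) (k : ℕ) {A : Set Ω}
    (hA : MeasurableSet[ℱ k] A) :
    μ (A ∩ S k) ≤ (ENNReal.ofReal η)⁻¹ * μ (A ∩ lastVisit S k) := by
  have hsparse := hS.2 k (A ∩ S k) Set.inter_subset_right (hA.inter (hS.1 k))
  rw [Set.inter_sdiff_assoc] at hsparse
  rwa [← ENNReal.mul_le_iff_le_inv (by simpa using hη) ENNReal.ofReal_ne_top]

theorem setLIntegral_le (hS : IsSparseAdaptedSeq μ ℱ η S) (hη : 0 < η) (k : ℕ)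
    {φ : Ω → ℝ≥0∞} (hφ : Measurable[ℱ k] φ) :
    ∫⁻ x in S k, φ x ∂μ ≤ (ENNReal.ofReal η)⁻¹ * ∫⁻ x in lastVisit S k, φ x ∂μ :=
  setLIntegral_le_mul_of_measure_inter_le (ℱ.le k) (fun _ hA => hS.measure_inter_le hη k hA) hφ

theorem lintegral_tsum_indicator_le (hS : IsSparseAdaptedSeq μ ℱ η S) (hη : 0 < η)
    {φ : ℕ → Ω → ℝ≥0∞} (hφ : ∀ k, Measurable[ℱ k] (φ k)) {Φ : Ω → ℝ≥0∞}
    (hφΦ : ∀ᵐ x ∂μ, ∀ k, φ k x ≤ Φ x) :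
    ∫⁻ x, ∑' k, (S k).indicator (φ k) x ∂μ ≤ (ENNReal.ofReal η)⁻¹ * ∫⁻ x, Φ x ∂μ := by
  calc ∫⁻ x, ∑' k, (S k).indicator (φ k) x ∂μ
      = ∑' k, ∫⁻ x in S k, φ k x ∂μ := by
        rw [lintegral_tsum fun k => ((hφ k).mono (ℱ.le k) le_rfl).aemeasurable.indicator
          (ℱ.le k _ (hS.1 k))]
        exact tsum_congr fun k => lintegral_indicator (ℱ.le k _ (hS.1 k)) _
    _ ≤ ∑' k, (ENNReal.ofReal η)⁻¹ * ∫⁻ x in lastVisit S k, Φ x ∂μ := by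
        refine ENNReal.tsum_le_tsum fun k => (hS.setLIntegral_le hη k (hφ k)).trans ?_
        gcongr 1
        exact setLIntegral_mono_ae' (hS.measurableSet_lastVisit k) <|
          hφΦ.mono fun x hx _ => hx k
    _ = (ENNReal.ofReal η)⁻¹ * ∫⁻ x in ⋃ k, lastVisit S k, Φ x ∂μ := by
        rw [ENNReal.tsum_mul_left,
          lintegral_iUnion hS.measurableSet_lastVisit (pairwise_disjoint_lastVisit S)]
    _ ≤ (ENNReal.ofReal η)⁻¹ * ∫⁻ x, Φ x ∂μ :=
        mul_le_mul_right (setLIntegral_le_lintegral _ _) _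

end IsSparseAdaptedSeq

theorem stmt5_general {Ω : Type*} {m0 : MeasurableSpace Ω} (μ : Measure Ω) [IsProbabilityMeasure μ]
    (ℱ : Filtration ℕ m0)
    (f : Ω → ℝ)
    (S : ℕ → Set Ω) (hS : IsSparseAdaptedSeq μ ℱ (1 / 2) S) :
    (∫⁻ x, (∑' k : ℕ,
        Set.indicator (S k) (fun z => ENNReal.ofReal |(μ[f | ℱ k]) z|) x) ∂μ) ≤
      2 * ∫⁻ x, ENNReal.ofReal (⨆ k : ℕ, |(μ[f | ℱ k]) x|) ∂μ := by
  have hcondExp : ∀ k, Measurable[ℱ k] fun z => ENNReal.ofReal |(μ[f | ℱ k]) z| :=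
    fun k => ENNReal.measurable_ofReal.comp <|
      measurable_abs.comp stronglyMeasurable_condExp.measurable
  have hdom : ∀ᵐ x ∂μ, ∀ k,
      ENNReal.ofReal |(μ[f | ℱ k]) x| ≤ ENNReal.ofReal (⨆ j, |(μ[f | ℱ j]) x|) :=
    (ae_abs_condExp_le_iSup ℱ f).mono fun x hx k => ENNReal.ofReal_le_ofReal (hx k)
  have htwo : (ENNReal.ofReal (1 / 2))⁻¹ = 2 := by
    rw [one_div, ENNReal.ofReal_inv_of_pos two_pos, inv_inv, ENNReal.ofReal_ofNat]
  simpa only [htwo] using hS.lintegral_tsum_indicator_le (by norm_num) hcondExp hdom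

theorem stmt5 {Ω : Type*} {m0 : MeasurableSpace Ω} (μ : Measure Ω) [IsProbabilityMeasure μ]
    (ℱ : Filtration ℕ m0) (hgen : (⨆ k, (ℱ k : MeasurableSpace Ω)) = m0)
    (f : Ω → ℝ) (hf : Integrable f μ)
    (S : ℕ → Set Ω) (hS : IsSparseAdaptedSeq μ ℱ (1 / 2) S) :
    (∫⁻ x, (∑' k : ℕ,
        Set.indicator (S k) (fun z => ENNReal.ofReal |(μ[f | ℱ k]) z|) x) ∂μ) ≤
      2 * ∫⁻ x, ENNReal.ofReal (⨆ k : ℕ, |(μ[f | ℱ k]) x|) ∂μ :=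
  stmt5_general μ ℱ f S hS
end

section
/- Let (X, μ) be a measure space and let E be a finite collection of measurable sets R ⊆ X with 0 < μ(R) < ∞. Let f : X → ℝ be integrable on each R ∈ E. Then there exists a subfamily S ⊆ E which is 1/2-sparse (i.e., for each R ∈ S there is a measurable set E_R ⊆ R with μ(E_R) ≥ μ(R)/2 and the sets {E_R}_{R∈S} are pairwise disjoint) such that M_E f(x) ≤ P_E^{1/2}(M_S f)(x) for every x ∈ X, where M_E f := sup_{R∈E} |⟨f⟩_R| 1_R, M_S f := sup_{R∈S} |⟨f⟩_R| 1_R, and P_E^{1/2}(g) := sup_{R∈E} P_R^{1/2}(g) 1_R. -/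
/-!
Select greedily: run through `E` by decreasing `|⟨f⟩_R|` and keep `R` when at least half of it is
not covered by the sets kept before; `E_R` is that uncovered half. Then every `R ∈ E`, kept or not,
has more than half of its measure inside kept sets `R'` with `|⟨f⟩_R| ≤ |⟨f⟩_R'|`, where
`M_S f ≥ |⟨f⟩_R|`; hence the median `P_R^{1/2}(M_S f)` is at least `|⟨f⟩_R|`.
-/

open MeasureTheory
open scoped ENNReal

/-- The average `⟨f⟩_R = μ(R)⁻¹ ∫_R f dμ`. -/
noncomputable def setAvg {X : Type*} [MeasurableSpace X] (μ : Measure X) (R : Set X)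
    (f : X → ℝ) : ℝ :=
  (μ R).toReal⁻¹ * ∫ x in R, f x ∂μ

/-- The percentile of `g` over `R` at ratio `r`:
`P_R^r(g) = inf{ λ ∈ ℝ : μ({x ∈ R : g(x) > λ}) ≤ r μ(R) }`. -/
noncomputable def setPerc {X : Type*} [MeasurableSpace X] (μ : Measure X) (R : Set X)
    (r : ℝ) (g : X → ℝ) : ℝ :=
  sInf {l : ℝ | μ {x ∈ R | g x > l} ≤ ENNReal.ofReal r * μ R}

section FinsetSupremum

variable {ι : Type*} (s : Finset ι)

lemma bddAbove_range_biSup_finset (v : ι → ℝ) :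
    BddAbove (Set.range fun i => ⨆ _ : i ∈ s, v i) := by
  refine ((s.finite_toSet.image v).insert 0).bddAbove.mono ?_
  rintro _ ⟨i, rfl⟩
  by_cases hi : i ∈ s
  · exact Or.inr ⟨i, hi, (ciSup_pos (f := fun _ => v i) hi).symm⟩
  · exact Or.inl ((ciSup_neg hi).trans Real.sSup_empty)

lemma le_biSup_finset (v : ι → ℝ) {i : ι} (hi : i ∈ s) : v i ≤ ⨆ j ∈ s, v j :=
  (ciSup_pos hi).symm.le.trans (le_ciSup (bddAbove_range_biSup_finset s v) i)

lemma biSup_finset_mono {u v : ι → ℝ} (h : ∀ i ∈ s, u i ≤ v i) :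
    ⨆ i ∈ s, u i ≤ ⨆ i ∈ s, v i := by
  refine ciSup_mono (bddAbove_range_biSup_finset s v) fun i => ?_
  by_cases hi : i ∈ s
  · simpa only [ciSup_pos hi] using h i hi
  · simp only [ciSup_neg hi, le_refl]

end FinsetSupremum

lemma ENNReal.lt_two_mul_of_two_mul_lt {m p q : ℝ≥0∞} (hm : m ≠ ∞) (hle : m ≤ p + q)
    (hq : 2 * q < m) : m < 2 * p := by
  by_contra! hp
  have := calc 2 * m ≤ 2 * p + 2 * q := by rw [← mul_add]; gcongr
    _ < m + m := ENNReal.add_lt_add_of_le_of_lt (hp.trans_lt hm.lt_top).ne hp hq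
    _ = 2 * m := (two_mul m).symm
  exact this.false

lemma ENNReal.ofReal_half_mul_lt {m m' : ℝ≥0∞} (h : m < 2 * m') :
    ENNReal.ofReal (1 / 2) * m < m' := by
  rwa [one_div, ENNReal.ofReal_inv_of_pos two_pos, ENNReal.ofReal_ofNat, ← ENNReal.div_eq_inv_mul,
    ENNReal.div_lt_iff (by simp) (by simp), mul_comm]

section Measure

variable {X : Type*} [MeasurableSpace X] {μ : Measure X}

lemma le_setPerc {R : Set X} {r c B : ℝ} {g : X → ℝ} (hB : ∀ x ∈ R, g x ≤ B)
    (hc : ENNReal.ofReal r * μ R < μ {x ∈ R | c ≤ g x}) : c ≤ setPerc μ R r g := by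
  refine le_csInf ⟨B, ?_⟩ fun l hl => ?_
  · have hempty : {x ∈ R | g x > B} = ∅ :=
      Set.eq_empty_of_forall_notMem fun x hx => (hB x hx.1).not_gt hx.2
    simp only [Set.mem_ofPred_eq, hempty, measure_empty, zero_le]
  · by_contra! hlc
    have hsub : {x ∈ R | c ≤ g x} ⊆ {x ∈ R | g x > l} := fun x hx => ⟨hx.1, hlc.trans_le hx.2⟩
    exact (hc.trans_le (measure_mono hsub)).not_ge hl

def IsHalfSparse (μ : Measure X) (S : Finset (Set X)) (Esel : Set X → Set X) : Prop :=
  (∀ R ∈ S, MeasurableSet (Esel R) ∧ Esel R ⊆ R ∧ μ R ≤ 2 * μ (Esel R)) ∧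
    (S : Set (Set X)).PairwiseDisjoint Esel

lemma isHalfSparse_empty (Esel : Set X → Set X) : IsHalfSparse μ ∅ Esel := by
  simp [IsHalfSparse]

lemma IsHalfSparse.insert [DecidableEq (Set X)] {S : Finset (Set X)} {Esel : Set X → Set X}
    (h : IsHalfSparse μ S Esel) {A : Set X} (hA : A ∉ S)
    (hmeas : MeasurableSet (A \ ⋃₀ (S : Set (Set X))))
    (hlarge : μ A ≤ 2 * μ (A \ ⋃₀ (S : Set (Set X)))) :
    IsHalfSparse μ (insert A S) (Function.update Esel A (A \ ⋃₀ (S : Set (Set X)))) := by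
  obtain ⟨hsel, hdisj⟩ := h
  have hne : ∀ R ∈ S, R ≠ A := fun R hR hRA => hA (hRA ▸ hR)
  refine ⟨fun R hR => ?_, ?_⟩
  · rcases Finset.mem_insert.mp hR with rfl | hR
    · rw [Function.update_self]
      exact ⟨hmeas, Set.sdiff_subset, hlarge⟩
    · rw [Function.update_of_ne (hne R hR)]
      exact hsel R hR
  · rw [Finset.coe_insert, Set.pairwiseDisjoint_insert]
    refine ⟨fun R hR R' hR' hRR' => ?_, fun R hR _ => ?_⟩
    · simpa only [Function.onFun, Function.update_of_ne (hne R hR),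
        Function.update_of_ne (hne R' hR')] using hdisj hR hR' hRR'
    · rw [Function.update_self, Function.update_of_ne (hne R hR)]
      exact Set.disjoint_of_subset_right ((hsel R hR).2.1.trans (Set.subset_sUnion_of_mem hR))
        Set.disjoint_sdiff_left

lemma measure_setOf_exists_mono (w : Set X → ℝ) (R : Set X) {S S' : Finset (Set X)}
    (h : S ⊆ S') :
    μ {x ∈ R | ∃ R' ∈ S, x ∈ R' ∧ w R ≤ w R'} ≤ μ {x ∈ R | ∃ R' ∈ S', x ∈ R' ∧ w R ≤ w R'} :=
  measure_mono fun _ ⟨hxR, R', hR', hx⟩ => ⟨hxR, R', h hR', hx⟩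

lemma exists_isHalfSparse_covering (w : Set X → ℝ) (s : Finset (Set X))
    (hmeas : ∀ R ∈ s, MeasurableSet R) (hpos : ∀ R ∈ s, μ R ≠ 0) (hfin : ∀ R ∈ s, μ R ≠ ∞) :
    ∃ S ⊆ s, (∃ Esel, IsHalfSparse μ S Esel) ∧
      ∀ R ∈ s, μ R < 2 * μ {x ∈ R | ∃ R' ∈ S, x ∈ R' ∧ w R ≤ w R'} := by
  classical
  induction s using Finset.induction_on_min_value w with
  | empty => exact ⟨∅, subset_rfl, ⟨fun _ => ∅, isHalfSparse_empty _⟩, by simp⟩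
  | insert A s hA hmin ih =>
    simp only [Finset.forall_mem_insert] at hmeas hpos hfin
    obtain ⟨S, hSs, ⟨Esel, hsparse⟩, hcover⟩ := ih hmeas.2 hpos.2 hfin.2
    set U := ⋃₀ (S : Set (Set X))
    have hU : MeasurableSet U :=
      S.finite_toSet.measurableSet_sUnion fun R hR => hmeas.2 R (hSs hR)
    have hAS : A ∉ S := fun h => hA (hSs h)
    by_cases hlarge : μ A ≤ 2 * μ (A \ U)
    · refine ⟨insert A S, Finset.insert_subset_insert A hSs,
        ⟨_, hsparse.insert hAS (hmeas.1.diff hU) hlarge⟩, ?_⟩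
      rw [Finset.forall_mem_insert]
      refine ⟨?_, fun R hR => (hcover R hR).trans_le ?_⟩
      · have hAcov : A ⊆ {x ∈ A | ∃ R' ∈ insert A S, x ∈ R' ∧ w A ≤ w R'} :=
          fun x hx => ⟨hx, A, Finset.mem_insert_self A S, hx, le_rfl⟩
        calc μ A < μ A + μ A := ENNReal.lt_add_right hfin.1 hpos.1
          _ = 2 * μ A := (two_mul _).symm
          _ ≤ _ := by gcongr
      · gcongr 2 * ?_
        exact measure_setOf_exists_mono w R (Finset.subset_insert A S)
    · refine ⟨S, hSs.trans (Finset.subset_insert A s), ⟨Esel, hsparse⟩, ?_⟩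
      rw [Finset.forall_mem_insert]
      refine ⟨?_, hcover⟩
      have hAU : A ∩ U ⊆ {x ∈ A | ∃ R' ∈ S, x ∈ R' ∧ w A ≤ w R'} :=
        fun x ⟨hxA, R', hR', hxR'⟩ => ⟨hxA, R', hR', hxR', hmin R' (hSs hR')⟩
      calc μ A < 2 * μ (A ∩ U) := ENNReal.lt_two_mul_of_two_mul_lt hfin.1
            (measure_le_inter_add_sdiff μ A U) (not_le.mp hlarge)
        _ ≤ _ := by gcongr

end Measure

section MaximalFunction

variable {X : Type*} {a : Set X → ℝ} {S : Finset (Set X)}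

lemma le_biSup_indicator {R : Set X} (hR : R ∈ S) {y : X} (hy : y ∈ R) :
    a R ≤ ⨆ R' ∈ S, R'.indicator (fun _ => a R') y := by
  simpa only [Set.indicator_of_mem hy] using
    le_biSup_finset S (fun R' => R'.indicator (fun _ => a R') y) hR

lemma biSup_indicator_le (ha : ∀ R ∈ S, 0 ≤ a R) (y : X) :
    ⨆ R' ∈ S, R'.indicator (fun _ => a R') y ≤ ⨆ R' ∈ S, a R' :=
  biSup_finset_mono S fun R hR => Set.indicator_apply_le' (fun _ => le_rfl) fun _ => ha R hR

end MaximalFunction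

theorem stmt6_general {X : Type*} [MeasurableSpace X] (μ : Measure X)
    (E : Finset (Set X))
    (hE : ∀ R ∈ E, MeasurableSet R ∧ 0 < μ R ∧ μ R < ⊤)
    (f : X → ℝ) :
    ∃ S : Finset (Set X), S ⊆ E ∧
      -- S is 1/2-sparse
      (∃ Esel : Set X → Set X,
        (∀ R ∈ S, MeasurableSet (Esel R) ∧ Esel R ⊆ R ∧ μ R ≤ 2 * μ (Esel R)) ∧
        (S : Set (Set X)).PairwiseDisjoint Esel) ∧
      -- pointwise domination M_E f ≤ P_E^{1/2}(M_S f)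
      ∀ x : X,
        (⨆ R ∈ E, Set.indicator R (fun _ => |setAvg μ R f|) x) ≤
          ⨆ R ∈ E, Set.indicator R
            (fun _ => setPerc μ R (1 / 2)
              (fun y => ⨆ R' ∈ S, Set.indicator R' (fun _ => |setAvg μ R' f|) y)) x := by
  obtain ⟨S, hSE, hsparse, hcover⟩ := exists_isHalfSparse_covering (fun R => |setAvg μ R f|) E
    (fun R hR => (hE R hR).1) (fun R hR => (hE R hR).2.1.ne') (fun R hR => (hE R hR).2.2.ne)
  set g := fun y => ⨆ R' ∈ S, Set.indicator R' (fun _ => |setAvg μ R' f|) y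
  have hperc : ∀ R ∈ E, |setAvg μ R f| ≤ setPerc μ R (1 / 2) g := fun R hR =>
    le_setPerc (fun y _ => biSup_indicator_le (fun _ _ => abs_nonneg _) y) <|
      (ENNReal.ofReal_half_mul_lt (hcover R hR)).trans_le <| measure_mono
        fun y ⟨hyR, R', hR', hyR', hle⟩ =>
          ⟨hyR, hle.trans (le_biSup_indicator (a := fun R => |setAvg μ R f|) hR' hyR')⟩
  exact ⟨S, hSE, hsparse,
    fun x => biSup_finset_mono E fun R hR => Set.indicator_le_indicator (hperc R hR)⟩

theorem stmt6 {X : Type*} [MeasurableSpace X] (μ : Measure X)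
    (E : Finset (Set X))
    (hE : ∀ R ∈ E, MeasurableSet R ∧ 0 < μ R ∧ μ R < ⊤)
    (f : X → ℝ) (hf : ∀ R ∈ E, IntegrableOn f R μ) :
    ∃ S : Finset (Set X), S ⊆ E ∧
      -- S is 1/2-sparse
      (∃ Esel : Set X → Set X,
        (∀ R ∈ S, MeasurableSet (Esel R) ∧ Esel R ⊆ R ∧ μ R ≤ 2 * μ (Esel R)) ∧
        (S : Set (Set X)).PairwiseDisjoint Esel) ∧
      -- pointwise domination M_E f ≤ P_E^{1/2}(M_S f)
      ∀ x : X,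
        (⨆ R ∈ E, Set.indicator R (fun _ => |setAvg μ R f|) x) ≤
          ⨆ R ∈ E, Set.indicator R
            (fun _ => setPerc μ R (1 / 2)
              (fun y => ⨆ R' ∈ S, Set.indicator R' (fun _ => |setAvg μ R' f|) y)) x :=
  stmt6_general μ E hE f
end
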